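/- arXiv:1603.01911 — 3 statements merged into one kernel-verified Lean document; each statement's English description precedes it below -/
import Mathlib

section
/- Let v be a positive integer and let σ₁ be the variable-gadget deck over 2v+1 colors. Then for every function b : {1,…,v} → {0,1} there is a play sequence of σ₁ with hand size 2 that plays the cards of values 1 and 2 of color 2v+1 and, for each i ≤ v, plays the cards of values 1,2,3,4,5 of color 2i−1 and the card of value 1 of color 2i if b(i) = 1, and plays the cards of values 1,2,3,4,5 of color 2i and the card of value 1 of color 2i−1 if b(i) = 0. -/
/-- A card is a pair (value, color). -/
abbrev Card : Type := ℕ × ℕ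

/-- The card at (0-indexed) position `i` of deck `σ` (junk `(0,0)` when out of range). -/
def nth (σ : List Card) (i : ℕ) : Card := σ.getD i (0, 0)

/-- A configuration: for each color, the highest value played so far in that color
(values `1,…,played k` of color `k` count as played), the hand (the set of positions
of the cards currently stored), and the set of positions of the cards played so far. -/
structure Config where
  played : ℕ → ℕ
  hand : Finset ℕ
  done : Finset ℕ

/-- `PlayFromHand σ cfg cfg'`: starting from `cfg`, play zero or more cards stored
in the hand (each playable card increments the progress of its color). -/
inductive PlayFromHand (σ : List Card) : Config → Config → Prop
  | refl (cfg : Config) : PlayFromHand σ cfg cfg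
  | play (cfg cfg' : Config) (j : ℕ) (hj : j ∈ cfg.hand)
      (hplay : cfg.played (nth σ j).2 + 1 = (nth σ j).1)
      (htail : PlayFromHand σ
        ⟨Function.update cfg.played (nth σ j).2 (nth σ j).1,
          cfg.hand.erase j, insert j cfg.done⟩ cfg') :
      PlayFromHand σ cfg cfg'

/-- `Step σ h i cfg cfg'`: processing the drawn card at position `i` with hand size `h`,
the player either discards it, stores it (the hand may never exceed `h` cards), or plays
it immediately (followed by playing any number of stored cards). -/
inductive Step (σ : List Card) (h : ℕ) (i : ℕ) : Config → Config → Prop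
  | discard (cfg : Config) : Step σ h i cfg cfg
  | store (cfg : Config) (hsize : (insert i cfg.hand).card ≤ h) :
      Step σ h i cfg ⟨cfg.played, insert i cfg.hand, cfg.done⟩
  | playNow (cfg cfg' : Config)
      (hplay : cfg.played (nth σ i).2 + 1 = (nth σ i).1)
      (htail : PlayFromHand σ
        ⟨Function.update cfg.played (nth σ i).2 (nth σ i).1,
          cfg.hand, insert i cfg.done⟩ cfg') :
      Step σ h i cfg cfg'

/-- The initial configuration: nothing played, empty hand. -/
def Config.initial : Config := ⟨fun _ => 0, ∅, ∅⟩

/-- A play sequence with hand size `h` on deck `σ`, starting from configuration `start`: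
a sequence of configurations where the `i`-th step processes the card at position `i`. -/
structure PlaySeq (σ : List Card) (h : ℕ) (start : Config) where
  cfgs : ℕ → Config
  init : cfgs 0 = start
  step : ∀ i < σ.length, Step σ h i (cfgs i) (cfgs (i + 1))

/-- The final configuration of a play sequence. -/
def PlaySeq.final {σ : List Card} {h : ℕ} {start : Config} (ps : PlaySeq σ h start) :
    Config := ps.cfgs σ.length

/-- A winning play sequence: for every color `k ∈ {1,…,c}`, all values `1,…,n` are played. -/
def PlaySeq.Winning {σ : List Card} {h : ℕ} {start : Config} (ps : PlaySeq σ h start)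
    (n c : ℕ) : Prop :=
  ∀ k, 1 ≤ k → k ≤ c → n ≤ ps.final.played k

/-- `σ` is a deck over `n` values and `c` colors. -/
def ValidDeck (σ : List Card) (n c : ℕ) : Prop :=
  ∀ cd ∈ σ, 1 ≤ cd.1 ∧ cd.1 ≤ n ∧ 1 ≤ cd.2 ∧ cd.2 ≤ c

/-- The variable gadget for variable `i` (`1 ≤ i ≤ v`), using colors `2i-1` and `2i`:
the block `2, 2̄, 1, 3, 4, 5, 1̄, 3̄, 4̄, 5̄`. -/
def varBlock (i : ℕ) : List Card :=
  [(2, 2*i-1), (2, 2*i), (1, 2*i-1), (3, 2*i-1), (4, 2*i-1), (5, 2*i-1),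
   (1, 2*i), (3, 2*i), (4, 2*i), (5, 2*i)]

/-- The variable-gadget deck `σ₁` over `2v+1` colors: the card `(2, 2v+1)`, the blocks
`V_1, …, V_v`, and the card `(1, 2v+1)`. -/
def sigma1 (v : ℕ) : List Card :=
  [(2, 2*v+1)] ++ ((List.range v).flatMap fun i => varBlock (i + 1)) ++ [(1, 2*v+1)]
lemma length_flat (v : ℕ) :
    ((List.range v).flatMap fun i => varBlock (i + 1)).length = 10 * v := by
  induction v with
  | zero => simp
  | succ v ih => rw [List.range_succ, List.flatMap_append, List.length_append, ih]
                 simp [varBlock]; omega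

lemma length_sigma1 (v : ℕ) : (sigma1 v).length = 10 * v + 2 := by
  unfold sigma1
  rw [List.length_append, List.length_append, length_flat]
  simp; omega

lemma flat_getD (v q r : ℕ) (hq : q < v) (hr : r < 10) :
    ((List.range v).flatMap fun i => varBlock (i + 1)).getD (10 * q + r) (0,0)
      = (varBlock (q + 1)).getD r (0,0) := by
  induction v with
  | zero => omega
  | succ v ih =>
    rw [List.range_succ, List.flatMap_append]
    rcases Nat.lt_or_ge q v with h | h
    · rw [List.getD_append _ _ _ _ (by rw [length_flat]; omega)]
      exact ih h
    · have hq' : q = v := by omega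
      subst hq'
      rw [List.getD_append_right _ _ _ _ (by rw [length_flat]; omega)]
      rw [length_flat]
      simp

lemma nth_block (v q r : ℕ) (hq : q < v) (hr : r < 10) :
    nth (sigma1 v) (10 * q + 1 + r) = (varBlock (q + 1)).getD r (0,0) := by
  unfold nth sigma1
  rw [List.getD_append _ _ _ _
    (by simp only [List.length_append, List.length_cons, List.length_nil, length_flat]; omega)]
  have h : 10 * q + 1 + r = (10 * q + r) + 1 := by omega
  rw [h]
  show (((2, 2*v+1) :: _).getD _ _) = _
  rw [List.getD_cons_succ]
  exact flat_getD v q r hq hr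

lemma nth_zero (v : ℕ) : nth (sigma1 v) 0 = (2, 2*v+1) := by
  unfold nth sigma1
  rw [List.getD_append _ _ _ _
    (by simp only [List.length_append, List.length_cons, List.length_nil, length_flat]; omega)]
  rfl

lemma nth_last (v : ℕ) : nth (sigma1 v) (10 * v + 1) = (1, 2*v+1) := by
  unfold nth sigma1
  rw [List.getD_append_right _ _ _ _
    (by simp only [List.length_append, List.length_cons, List.length_nil, length_flat]; omega)]
  rw [List.length_append, length_flat]
  rw [show 10*v+1 - ([((2:ℕ),2*v+1)].length + 10*v) = 0 from by simp]
  rfl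
set_option linter.unreachableTactic false
set_option linter.unusedTactic false

lemma nth_p1 (v q : ℕ) (hq : q < v) : nth (sigma1 v) (10*q+1) = (2, 2*q+1) := by
  have h := nth_block v q 0 hq (by norm_num)
  rw [show 10*q+1+0 = 10*q+1 from by omega] at h
  rw [h]; simp [varBlock]; constructor <;> omega

lemma nth_p2 (v q : ℕ) (hq : q < v) : nth (sigma1 v) (10*q+2) = (2, 2*q+2) := by
  have h := nth_block v q 1 hq (by norm_num)
  rw [show 10*q+1+1 = 10*q+2 from by omega] at h
  rw [h]; simp [varBlock]; constructor <;> omega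

lemma nth_p3 (v q : ℕ) (hq : q < v) : nth (sigma1 v) (10*q+3) = (1, 2*q+1) := by
  have h := nth_block v q 2 hq (by norm_num)
  rw [show 10*q+1+2 = 10*q+3 from by omega] at h
  rw [h]; simp [varBlock]; constructor <;> omega

lemma nth_p4 (v q : ℕ) (hq : q < v) : nth (sigma1 v) (10*q+4) = (3, 2*q+1) := by
  have h := nth_block v q 3 hq (by norm_num)
  rw [show 10*q+1+3 = 10*q+4 from by omega] at h
  rw [h]; simp [varBlock]; constructor <;> omega

lemma nth_p5 (v q : ℕ) (hq : q < v) : nth (sigma1 v) (10*q+5) = (4, 2*q+1) := by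
  have h := nth_block v q 4 hq (by norm_num)
  rw [show 10*q+1+4 = 10*q+5 from by omega] at h
  rw [h]; simp [varBlock]; constructor <;> omega

lemma nth_p6 (v q : ℕ) (hq : q < v) : nth (sigma1 v) (10*q+6) = (5, 2*q+1) := by
  have h := nth_block v q 5 hq (by norm_num)
  rw [show 10*q+1+5 = 10*q+6 from by omega] at h
  rw [h]; simp [varBlock]; constructor <;> omega

lemma nth_p7 (v q : ℕ) (hq : q < v) : nth (sigma1 v) (10*q+7) = (1, 2*q+2) := by
  have h := nth_block v q 6 hq (by norm_num)
  rw [show 10*q+1+6 = 10*q+7 from by omega] at h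
  rw [h]; simp [varBlock]; constructor <;> omega

lemma nth_p8 (v q : ℕ) (hq : q < v) : nth (sigma1 v) (10*q+8) = (3, 2*q+2) := by
  have h := nth_block v q 7 hq (by norm_num)
  rw [show 10*q+1+7 = 10*q+8 from by omega] at h
  rw [h]; simp [varBlock]; constructor <;> omega

lemma nth_p9 (v q : ℕ) (hq : q < v) : nth (sigma1 v) (10*q+9) = (4, 2*q+2) := by
  have h := nth_block v q 8 hq (by norm_num)
  rw [show 10*q+1+8 = 10*q+9 from by omega] at h
  rw [h]; simp [varBlock]; constructor <;> omega

lemma nth_p10 (v q : ℕ) (hq : q < v) : nth (sigma1 v) (10*q+10) = (5, 2*q+2) := by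
  have h := nth_block v q 9 hq (by norm_num)
  rw [show 10*q+1+9 = 10*q+10 from by omega] at h
  rw [h]; simp [varBlock]; constructor <;> omega
/-- Final value of color `k` under assignment `b`. -/
def finVal (b : ℕ → Bool) (k : ℕ) : ℕ :=
  if k % 2 = 1 then (if b ((k+1)/2) then 5 else 1) else (if b (k/2) then 1 else 5)

/-- Played function after completing the first `q` blocks. -/
def pAfter (b : ℕ → Bool) (q : ℕ) : ℕ → ℕ :=
  fun k => if 1 ≤ k ∧ k ≤ 2*q then finVal b k else 0

/-- The strategy: what the player does with the card at position `i`. -/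
def next (v : ℕ) (b : ℕ → Bool) (i : ℕ) (cfg : Config) : Config :=
  if i = 0 then ⟨cfg.played, insert 0 cfg.hand, cfg.done⟩
  else if (i-1)/10 = v then
    ⟨Function.update (Function.update cfg.played (2*v+1) 1) (2*v+1) 2,
      cfg.hand.erase 0, insert 0 (insert i cfg.done)⟩
  else if b ((i-1)/10 + 1) then
    if (i-1) % 10 = 0 then ⟨cfg.played, insert i cfg.hand, cfg.done⟩
    else if (i-1) % 10 = 2 then
      ⟨Function.update (Function.update cfg.played (2*((i-1)/10)+1) 1) (2*((i-1)/10)+1) 2,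
        cfg.hand.erase (10*((i-1)/10)+1), insert (10*((i-1)/10)+1) (insert i cfg.done)⟩
    else if (i-1) % 10 = 3 then
      ⟨Function.update cfg.played (2*((i-1)/10)+1) 3, cfg.hand, insert i cfg.done⟩
    else if (i-1) % 10 = 4 then
      ⟨Function.update cfg.played (2*((i-1)/10)+1) 4, cfg.hand, insert i cfg.done⟩
    else if (i-1) % 10 = 5 then
      ⟨Function.update cfg.played (2*((i-1)/10)+1) 5, cfg.hand, insert i cfg.done⟩
    else if (i-1) % 10 = 6 then
      ⟨Function.update cfg.played (2*((i-1)/10)+2) 1, cfg.hand, insert i cfg.done⟩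
    else cfg
  else
    if (i-1) % 10 = 1 then ⟨cfg.played, insert i cfg.hand, cfg.done⟩
    else if (i-1) % 10 = 2 then
      ⟨Function.update cfg.played (2*((i-1)/10)+1) 1, cfg.hand, insert i cfg.done⟩
    else if (i-1) % 10 = 6 then
      ⟨Function.update (Function.update cfg.played (2*((i-1)/10)+2) 1) (2*((i-1)/10)+2) 2,
        cfg.hand.erase (10*((i-1)/10)+2), insert (10*((i-1)/10)+2) (insert i cfg.done)⟩
    else if (i-1) % 10 = 7 then
      ⟨Function.update cfg.played (2*((i-1)/10)+2) 3, cfg.hand, insert i cfg.done⟩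
    else if (i-1) % 10 = 8 then
      ⟨Function.update cfg.played (2*((i-1)/10)+2) 4, cfg.hand, insert i cfg.done⟩
    else if (i-1) % 10 = 9 then
      ⟨Function.update cfg.played (2*((i-1)/10)+2) 5, cfg.hand, insert i cfg.done⟩
    else cfg

/-- The sequence of configurations produced by the strategy. -/
def run (v : ℕ) (b : ℕ → Bool) : ℕ → Config
  | 0 => Config.initial
  | (i+1) => next v b i (run v b i)

lemma run_succ (v : ℕ) (b : ℕ → Bool) (n : ℕ) :
    run v b (n+1) = next v b n (run v b n) := rfl

lemma next_block' (v : ℕ) (b : ℕ → Bool) (q r i : ℕ) (hq : q < v) (hr : r < 10)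
    (hi : i = 10*q+1+r) (cfg : Config) :
    next v b i cfg =
      (if b (q + 1) then
        if r = 0 then ⟨cfg.played, insert i cfg.hand, cfg.done⟩
        else if r = 2 then
          ⟨Function.update (Function.update cfg.played (2*q+1) 1) (2*q+1) 2,
            cfg.hand.erase (10*q+1), insert (10*q+1) (insert i cfg.done)⟩
        else if r = 3 then
          ⟨Function.update cfg.played (2*q+1) 3, cfg.hand, insert i cfg.done⟩
        else if r = 4 then
          ⟨Function.update cfg.played (2*q+1) 4, cfg.hand, insert i cfg.done⟩
        else if r = 5 then
          ⟨Function.update cfg.played (2*q+1) 5, cfg.hand, insert i cfg.done⟩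
        else if r = 6 then
          ⟨Function.update cfg.played (2*q+2) 1, cfg.hand, insert i cfg.done⟩
        else cfg
      else
        if r = 1 then ⟨cfg.played, insert i cfg.hand, cfg.done⟩
        else if r = 2 then
          ⟨Function.update cfg.played (2*q+1) 1, cfg.hand, insert i cfg.done⟩
        else if r = 6 then
          ⟨Function.update (Function.update cfg.played (2*q+2) 1) (2*q+2) 2,
            cfg.hand.erase (10*q+2), insert (10*q+2) (insert i cfg.done)⟩
        else if r = 7 then
          ⟨Function.update cfg.played (2*q+2) 3, cfg.hand, insert i cfg.done⟩
        else if r = 8 then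
          ⟨Function.update cfg.played (2*q+2) 4, cfg.hand, insert i cfg.done⟩
        else if r = 9 then
          ⟨Function.update cfg.played (2*q+2) 5, cfg.hand, insert i cfg.done⟩
        else cfg) := by
  subst hi
  unfold next
  rw [if_neg (by omega : ¬ (10*q+1+r = 0))]
  rw [show (10*q+1+r-1) = 10*q+r from by omega]
  rw [show (10*q+r)/10 = q from by omega, show (10*q+r)%10 = r from by omega]
  rw [if_neg (by omega : ¬ (q = v))]
set_option maxHeartbeats 1000000 in
lemma block_all (v : ℕ) (b : ℕ → Bool) (q : ℕ) (hq : q < v)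
    (hP : (run v b (10*q+1)).played = pAfter b q)
    (hH : (run v b (10*q+1)).hand = {0}) :
    ((run v b (10*(q+1)+1)).played = pAfter b (q+1) ∧
      (run v b (10*(q+1)+1)).hand = {0}) ∧
    ∀ r < 10, Step (sigma1 v) 2 (10*q+1+r) (run v b (10*q+1+r)) (run v b (10*q+1+r+1)) := by
  rcases hbc : b (q+1) with _ | _
  · have hb : b (q+1) = false := hbc
    have h1 : run v b (10*q+2) = ⟨(run v b (10*q+1)).played, (run v b (10*q+1)).hand, (run v b (10*q+1)).done⟩ := by
      rw [show (10*q+2:ℕ) = (10*q+1)+1 from by omega, run_succ, next_block' v b q 0 (10*q+1) hq (by norm_num) (by omega)]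
      simp [hb]
    have h2 : run v b (10*q+3) = ⟨(run v b (10*q+1)).played, insert (10*q+2) ((run v b (10*q+1)).hand), (run v b (10*q+1)).done⟩ := by
      rw [show (10*q+3:ℕ) = (10*q+2)+1 from by omega, run_succ, h1, next_block' v b q 1 (10*q+2) hq (by norm_num) (by omega)]
      simp [hb]
    have h3 : run v b (10*q+4) = ⟨Function.update ((run v b (10*q+1)).played) (2*q+1) 1, insert (10*q+2) ((run v b (10*q+1)).hand), insert (10*q+3) ((run v b (10*q+1)).done)⟩ := by
      rw [show (10*q+4:ℕ) = (10*q+3)+1 from by omega, run_succ, h2, next_block' v b q 2 (10*q+3) hq (by norm_num) (by omega)]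
      simp [hb]
    have h4 : run v b (10*q+5) = ⟨Function.update ((run v b (10*q+1)).played) (2*q+1) 1, insert (10*q+2) ((run v b (10*q+1)).hand), insert (10*q+3) ((run v b (10*q+1)).done)⟩ := by
      rw [show (10*q+5:ℕ) = (10*q+4)+1 from by omega, run_succ, h3, next_block' v b q 3 (10*q+4) hq (by norm_num) (by omega)]
      simp [hb]
    have h5 : run v b (10*q+6) = ⟨Function.update ((run v b (10*q+1)).played) (2*q+1) 1, insert (10*q+2) ((run v b (10*q+1)).hand), insert (10*q+3) ((run v b (10*q+1)).done)⟩ := by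
      rw [show (10*q+6:ℕ) = (10*q+5)+1 from by omega, run_succ, h4, next_block' v b q 4 (10*q+5) hq (by norm_num) (by omega)]
      simp [hb]
    have h6 : run v b (10*q+7) = ⟨Function.update ((run v b (10*q+1)).played) (2*q+1) 1, insert (10*q+2) ((run v b (10*q+1)).hand), insert (10*q+3) ((run v b (10*q+1)).done)⟩ := by
      rw [show (10*q+7:ℕ) = (10*q+6)+1 from by omega, run_succ, h5, next_block' v b q 5 (10*q+6) hq (by norm_num) (by omega)]
      simp [hb]
    have h7 : run v b (10*q+8) = ⟨Function.update (Function.update (Function.update ((run v b (10*q+1)).played) (2*q+1) 1) (2*q+2) 1) (2*q+2) 2, (insert (10*q+2) ((run v b (10*q+1)).hand)).erase (10*q+2), insert (10*q+2) (insert (10*q+7) (insert (10*q+3) ((run v b (10*q+1)).done)))⟩ := by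
      rw [show (10*q+8:ℕ) = (10*q+7)+1 from by omega, run_succ, h6, next_block' v b q 6 (10*q+7) hq (by norm_num) (by omega)]
      simp [hb]
    have h8 : run v b (10*q+9) = ⟨Function.update (Function.update (Function.update (Function.update ((run v b (10*q+1)).played) (2*q+1) 1) (2*q+2) 1) (2*q+2) 2) (2*q+2) 3, (insert (10*q+2) ((run v b (10*q+1)).hand)).erase (10*q+2), insert (10*q+8) (insert (10*q+2) (insert (10*q+7) (insert (10*q+3) ((run v b (10*q+1)).done))))⟩ := by
      rw [show (10*q+9:ℕ) = (10*q+8)+1 from by omega, run_succ, h7, next_block' v b q 7 (10*q+8) hq (by norm_num) (by omega)]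
      simp [hb]
    have h9 : run v b (10*q+10) = ⟨Function.update (Function.update (Function.update (Function.update (Function.update ((run v b (10*q+1)).played) (2*q+1) 1) (2*q+2) 1) (2*q+2) 2) (2*q+2) 3) (2*q+2) 4, (insert (10*q+2) ((run v b (10*q+1)).hand)).erase (10*q+2), insert (10*q+9) (insert (10*q+8) (insert (10*q+2) (insert (10*q+7) (insert (10*q+3) ((run v b (10*q+1)).done)))))⟩ := by
      rw [show (10*q+10:ℕ) = (10*q+9)+1 from by omega, run_succ, h8, next_block' v b q 8 (10*q+9) hq (by norm_num) (by omega)]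
      simp [hb]
    have h10 : run v b (10*q+11) = ⟨Function.update (Function.update (Function.update (Function.update (Function.update (Function.update ((run v b (10*q+1)).played) (2*q+1) 1) (2*q+2) 1) (2*q+2) 2) (2*q+2) 3) (2*q+2) 4) (2*q+2) 5, (insert (10*q+2) ((run v b (10*q+1)).hand)).erase (10*q+2), insert (10*q+10) (insert (10*q+9) (insert (10*q+8) (insert (10*q+2) (insert (10*q+7) (insert (10*q+3) ((run v b (10*q+1)).done))))))⟩ := by
      rw [show (10*q+11:ℕ) = (10*q+10)+1 from by omega, run_succ, h9, next_block' v b q 9 (10*q+10) hq (by norm_num) (by omega)]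
      simp [hb]
    refine ⟨⟨?_, ?_⟩, ?_⟩
    · rw [show (10*(q+1)+1:ℕ) = 10*q+11 from by omega, h10, hP]
      funext k
      dsimp only
      have hne : (2*q+1:ℕ) ≠ 2*q+2 := by omega
      rcases eq_or_ne k (2*q+2) with rfl | hk2
      · rw [Function.update_self]
        unfold pAfter finVal
        rw [if_pos (by omega), if_neg (by omega), show (2*q+2)/2 = q+1 from by omega, hb]
        norm_num
      · rcases eq_or_ne k (2*q+1) with rfl | hk1
        · rw [Function.update_of_ne hne, Function.update_of_ne hne, Function.update_of_ne hne,
              Function.update_of_ne hne, Function.update_of_ne hne, Function.update_self]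
          unfold pAfter finVal
          rw [if_pos (by omega), if_pos (by omega), show (2*q+1+1)/2 = q+1 from by omega, hb]
          norm_num
        · rw [Function.update_of_ne hk2, Function.update_of_ne hk2, Function.update_of_ne hk2,
              Function.update_of_ne hk2, Function.update_of_ne hk2, Function.update_of_ne hk1]
          unfold pAfter
          by_cases h3 : 1 ≤ k ∧ k ≤ 2*q
          · rw [if_pos h3, if_pos (by omega)]
          · rw [if_neg h3, if_neg (by omega)]
    · rw [show (10*(q+1)+1:ℕ) = 10*q+11 from by omega, h10, hH]
      exact Finset.erase_insert (by simp only [Finset.mem_singleton]; omega)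
    · intro r hr
      interval_cases r
      · -- r = 0
        rw [show (10*q+1+0:ℕ) = 10*q+1 from by omega, show (10*q+1+1:ℕ) = 10*q+2 from by omega, h1]
        exact Step.discard _
      · -- r = 1
        rw [show (10*q+1+1:ℕ) = 10*q+2 from by omega, show (10*q+2+1:ℕ) = 10*q+3 from by omega, h1, h2]
        exact Step.store _ (le_trans (Finset.card_insert_le _ _) (by rw [hH]; simp))
      · -- r = 2
        rw [show (10*q+1+2:ℕ) = 10*q+3 from by omega, show (10*q+3+1:ℕ) = 10*q+4 from by omega, h2, h3]
        refine Step.playNow _ _ ?_ ?_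
        · rw [nth_p3 v q hq]
          simp only [hP, Function.update, pAfter, finVal]
          split_ifs <;> omega
        · rw [nth_p3 v q hq]
          exact PlayFromHand.refl _
      · -- r = 3
        rw [show (10*q+1+3:ℕ) = 10*q+4 from by omega, show (10*q+4+1:ℕ) = 10*q+5 from by omega, h3, h4]
        exact Step.discard _
      · -- r = 4
        rw [show (10*q+1+4:ℕ) = 10*q+5 from by omega, show (10*q+5+1:ℕ) = 10*q+6 from by omega, h4, h5]
        exact Step.discard _
      · -- r = 5
        rw [show (10*q+1+5:ℕ) = 10*q+6 from by omega, show (10*q+6+1:ℕ) = 10*q+7 from by omega, h5, h6]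
        exact Step.discard _
      · -- r = 6
        rw [show (10*q+1+6:ℕ) = 10*q+7 from by omega, show (10*q+7+1:ℕ) = 10*q+8 from by omega, h6, h7]
        refine Step.playNow _ _ ?_ ?_
        · rw [nth_p7 v q hq]
          simp only [hP, Function.update, pAfter, finVal]
          split_ifs <;> omega
        · rw [nth_p7 v q hq]
          refine PlayFromHand.play _ _ (10*q+2) ?_ ?_ ?_
          · exact Finset.mem_insert_self _ _
          · rw [nth_p2 v q hq]
            simp only [Function.update, pAfter, finVal, hP]
            split_ifs <;> omega
          · rw [nth_p2 v q hq]
            exact PlayFromHand.refl _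
      · -- r = 7
        rw [show (10*q+1+7:ℕ) = 10*q+8 from by omega, show (10*q+8+1:ℕ) = 10*q+9 from by omega, h7, h8]
        refine Step.playNow _ _ ?_ ?_
        · rw [nth_p8 v q hq]
          simp only [hP, Function.update, pAfter, finVal]
          split_ifs <;> omega
        · rw [nth_p8 v q hq]
          exact PlayFromHand.refl _
      · -- r = 8
        rw [show (10*q+1+8:ℕ) = 10*q+9 from by omega, show (10*q+9+1:ℕ) = 10*q+10 from by omega, h8, h9]
        refine Step.playNow _ _ ?_ ?_
        · rw [nth_p9 v q hq]
          simp only [hP, Function.update, pAfter, finVal]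
          split_ifs <;> omega
        · rw [nth_p9 v q hq]
          exact PlayFromHand.refl _
      · -- r = 9
        rw [show (10*q+1+9:ℕ) = 10*q+10 from by omega, show (10*q+10+1:ℕ) = 10*q+11 from by omega, h9, h10]
        refine Step.playNow _ _ ?_ ?_
        · rw [nth_p10 v q hq]
          simp only [hP, Function.update, pAfter, finVal]
          split_ifs <;> omega
        · rw [nth_p10 v q hq]
          exact PlayFromHand.refl _
  · have hb : b (q+1) = true := hbc
    have h1 : run v b (10*q+2) = ⟨(run v b (10*q+1)).played, insert (10*q+1) ((run v b (10*q+1)).hand), (run v b (10*q+1)).done⟩ := by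
      rw [show (10*q+2:ℕ) = (10*q+1)+1 from by omega, run_succ, next_block' v b q 0 (10*q+1) hq (by norm_num) (by omega)]
      simp [hb]
    have h2 : run v b (10*q+3) = ⟨(run v b (10*q+1)).played, insert (10*q+1) ((run v b (10*q+1)).hand), (run v b (10*q+1)).done⟩ := by
      rw [show (10*q+3:ℕ) = (10*q+2)+1 from by omega, run_succ, h1, next_block' v b q 1 (10*q+2) hq (by norm_num) (by omega)]
      simp [hb]
    have h3 : run v b (10*q+4) = ⟨Function.update (Function.update ((run v b (10*q+1)).played) (2*q+1) 1) (2*q+1) 2, (insert (10*q+1) ((run v b (10*q+1)).hand)).erase (10*q+1), insert (10*q+1) (insert (10*q+3) ((run v b (10*q+1)).done))⟩ := by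
      rw [show (10*q+4:ℕ) = (10*q+3)+1 from by omega, run_succ, h2, next_block' v b q 2 (10*q+3) hq (by norm_num) (by omega)]
      simp [hb]
    have h4 : run v b (10*q+5) = ⟨Function.update (Function.update (Function.update ((run v b (10*q+1)).played) (2*q+1) 1) (2*q+1) 2) (2*q+1) 3, (insert (10*q+1) ((run v b (10*q+1)).hand)).erase (10*q+1), insert (10*q+4) (insert (10*q+1) (insert (10*q+3) ((run v b (10*q+1)).done)))⟩ := by
      rw [show (10*q+5:ℕ) = (10*q+4)+1 from by omega, run_succ, h3, next_block' v b q 3 (10*q+4) hq (by norm_num) (by omega)]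
      simp [hb]
    have h5 : run v b (10*q+6) = ⟨Function.update (Function.update (Function.update (Function.update ((run v b (10*q+1)).played) (2*q+1) 1) (2*q+1) 2) (2*q+1) 3) (2*q+1) 4, (insert (10*q+1) ((run v b (10*q+1)).hand)).erase (10*q+1), insert (10*q+5) (insert (10*q+4) (insert (10*q+1) (insert (10*q+3) ((run v b (10*q+1)).done))))⟩ := by
      rw [show (10*q+6:ℕ) = (10*q+5)+1 from by omega, run_succ, h4, next_block' v b q 4 (10*q+5) hq (by norm_num) (by omega)]
      simp [hb]
    have h6 : run v b (10*q+7) = ⟨Function.update (Function.update (Function.update (Function.update (Function.update ((run v b (10*q+1)).played) (2*q+1) 1) (2*q+1) 2) (2*q+1) 3) (2*q+1) 4) (2*q+1) 5, (insert (10*q+1) ((run v b (10*q+1)).hand)).erase (10*q+1), insert (10*q+6) (insert (10*q+5) (insert (10*q+4) (insert (10*q+1) (insert (10*q+3) ((run v b (10*q+1)).done)))))⟩ := by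
      rw [show (10*q+7:ℕ) = (10*q+6)+1 from by omega, run_succ, h5, next_block' v b q 5 (10*q+6) hq (by norm_num) (by omega)]
      simp [hb]
    have h7 : run v b (10*q+8) = ⟨Function.update (Function.update (Function.update (Function.update (Function.update (Function.update ((run v b (10*q+1)).played) (2*q+1) 1) (2*q+1) 2) (2*q+1) 3) (2*q+1) 4) (2*q+1) 5) (2*q+2) 1, (insert (10*q+1) ((run v b (10*q+1)).hand)).erase (10*q+1), insert (10*q+7) (insert (10*q+6) (insert (10*q+5) (insert (10*q+4) (insert (10*q+1) (insert (10*q+3) ((run v b (10*q+1)).done))))))⟩ := by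
      rw [show (10*q+8:ℕ) = (10*q+7)+1 from by omega, run_succ, h6, next_block' v b q 6 (10*q+7) hq (by norm_num) (by omega)]
      simp [hb]
    have h8 : run v b (10*q+9) = ⟨Function.update (Function.update (Function.update (Function.update (Function.update (Function.update ((run v b (10*q+1)).played) (2*q+1) 1) (2*q+1) 2) (2*q+1) 3) (2*q+1) 4) (2*q+1) 5) (2*q+2) 1, (insert (10*q+1) ((run v b (10*q+1)).hand)).erase (10*q+1), insert (10*q+7) (insert (10*q+6) (insert (10*q+5) (insert (10*q+4) (insert (10*q+1) (insert (10*q+3) ((run v b (10*q+1)).done))))))⟩ := by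
      rw [show (10*q+9:ℕ) = (10*q+8)+1 from by omega, run_succ, h7, next_block' v b q 7 (10*q+8) hq (by norm_num) (by omega)]
      simp [hb]
    have h9 : run v b (10*q+10) = ⟨Function.update (Function.update (Function.update (Function.update (Function.update (Function.update ((run v b (10*q+1)).played) (2*q+1) 1) (2*q+1) 2) (2*q+1) 3) (2*q+1) 4) (2*q+1) 5) (2*q+2) 1, (insert (10*q+1) ((run v b (10*q+1)).hand)).erase (10*q+1), insert (10*q+7) (insert (10*q+6) (insert (10*q+5) (insert (10*q+4) (insert (10*q+1) (insert (10*q+3) ((run v b (10*q+1)).done))))))⟩ := by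
      rw [show (10*q+10:ℕ) = (10*q+9)+1 from by omega, run_succ, h8, next_block' v b q 8 (10*q+9) hq (by norm_num) (by omega)]
      simp [hb]
    have h10 : run v b (10*q+11) = ⟨Function.update (Function.update (Function.update (Function.update (Function.update (Function.update ((run v b (10*q+1)).played) (2*q+1) 1) (2*q+1) 2) (2*q+1) 3) (2*q+1) 4) (2*q+1) 5) (2*q+2) 1, (insert (10*q+1) ((run v b (10*q+1)).hand)).erase (10*q+1), insert (10*q+7) (insert (10*q+6) (insert (10*q+5) (insert (10*q+4) (insert (10*q+1) (insert (10*q+3) ((run v b (10*q+1)).done))))))⟩ := by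
      rw [show (10*q+11:ℕ) = (10*q+10)+1 from by omega, run_succ, h9, next_block' v b q 9 (10*q+10) hq (by norm_num) (by omega)]
      simp [hb]
    refine ⟨⟨?_, ?_⟩, ?_⟩
    · rw [show (10*(q+1)+1:ℕ) = 10*q+11 from by omega, h10, hP]
      funext k
      dsimp only
      have hne : (2*q+1:ℕ) ≠ 2*q+2 := by omega
      rcases eq_or_ne k (2*q+2) with rfl | hk2
      · rw [Function.update_self]
        unfold pAfter finVal
        rw [if_pos (by omega), if_neg (by omega), show (2*q+2)/2 = q+1 from by omega, hb]
        norm_num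
      · rcases eq_or_ne k (2*q+1) with rfl | hk1
        · rw [Function.update_of_ne hne, Function.update_self]
          unfold pAfter finVal
          rw [if_pos (by omega), if_pos (by omega), show (2*q+1+1)/2 = q+1 from by omega, hb]
          norm_num
        · rw [Function.update_of_ne hk2, Function.update_of_ne hk1, Function.update_of_ne hk1,
              Function.update_of_ne hk1, Function.update_of_ne hk1, Function.update_of_ne hk1]
          unfold pAfter
          by_cases h3 : 1 ≤ k ∧ k ≤ 2*q
          · rw [if_pos h3, if_pos (by omega)]
          · rw [if_neg h3, if_neg (by omega)]
    · rw [show (10*(q+1)+1:ℕ) = 10*q+11 from by omega, h10, hH]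
      exact Finset.erase_insert (by simp only [Finset.mem_singleton]; omega)
    · intro r hr
      interval_cases r
      · -- r = 0
        rw [show (10*q+1+0:ℕ) = 10*q+1 from by omega, show (10*q+1+1:ℕ) = 10*q+2 from by omega, h1]
        exact Step.store _ (le_trans (Finset.card_insert_le _ _) (by rw [hH]; simp))
      · -- r = 1
        rw [show (10*q+1+1:ℕ) = 10*q+2 from by omega, show (10*q+2+1:ℕ) = 10*q+3 from by omega, h1, h2]
        exact Step.discard _
      · -- r = 2
        rw [show (10*q+1+2:ℕ) = 10*q+3 from by omega, show (10*q+3+1:ℕ) = 10*q+4 from by omega, h2, h3]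
        refine Step.playNow _ _ ?_ ?_
        · rw [nth_p3 v q hq]
          simp only [hP, Function.update, pAfter, finVal]
          split_ifs <;> omega
        · rw [nth_p3 v q hq]
          refine PlayFromHand.play _ _ (10*q+1) ?_ ?_ ?_
          · exact Finset.mem_insert_self _ _
          · rw [nth_p1 v q hq]
            simp only [Function.update, pAfter, finVal, hP]
            split_ifs <;> omega
          · rw [nth_p1 v q hq]
            exact PlayFromHand.refl _
      · -- r = 3
        rw [show (10*q+1+3:ℕ) = 10*q+4 from by omega, show (10*q+4+1:ℕ) = 10*q+5 from by omega, h3, h4]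
        refine Step.playNow _ _ ?_ ?_
        · rw [nth_p4 v q hq]
          simp only [hP, Function.update, pAfter, finVal]
          split_ifs <;> omega
        · rw [nth_p4 v q hq]
          exact PlayFromHand.refl _
      · -- r = 4
        rw [show (10*q+1+4:ℕ) = 10*q+5 from by omega, show (10*q+5+1:ℕ) = 10*q+6 from by omega, h4, h5]
        refine Step.playNow _ _ ?_ ?_
        · rw [nth_p5 v q hq]
          simp only [hP, Function.update, pAfter, finVal]
          split_ifs <;> omega
        · rw [nth_p5 v q hq]
          exact PlayFromHand.refl _
      · -- r = 5
        rw [show (10*q+1+5:ℕ) = 10*q+6 from by omega, show (10*q+6+1:ℕ) = 10*q+7 from by omega, h5, h6]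
        refine Step.playNow _ _ ?_ ?_
        · rw [nth_p6 v q hq]
          simp only [hP, Function.update, pAfter, finVal]
          split_ifs <;> omega
        · rw [nth_p6 v q hq]
          exact PlayFromHand.refl _
      · -- r = 6
        rw [show (10*q+1+6:ℕ) = 10*q+7 from by omega, show (10*q+7+1:ℕ) = 10*q+8 from by omega, h6, h7]
        refine Step.playNow _ _ ?_ ?_
        · rw [nth_p7 v q hq]
          simp only [hP, Function.update, pAfter, finVal]
          split_ifs <;> omega
        · rw [nth_p7 v q hq]
          exact PlayFromHand.refl _
      · -- r = 7
        rw [show (10*q+1+7:ℕ) = 10*q+8 from by omega, show (10*q+8+1:ℕ) = 10*q+9 from by omega, h7, h8]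
        exact Step.discard _
      · -- r = 8
        rw [show (10*q+1+8:ℕ) = 10*q+9 from by omega, show (10*q+9+1:ℕ) = 10*q+10 from by omega, h8, h9]
        exact Step.discard _
      · -- r = 9
        rw [show (10*q+1+9:ℕ) = 10*q+10 from by omega, show (10*q+10+1:ℕ) = 10*q+11 from by omega, h9, h10]
        exact Step.discard _
lemma inv (v : ℕ) (b : ℕ → Bool) : ∀ q ≤ v,
    (run v b (10*q+1)).played = pAfter b q ∧ (run v b (10*q+1)).hand = {0} := by
  intro q
  induction q with
  | zero =>
    intro _
    have h1 : run v b (10*0+1) = ⟨Config.initial.played, insert 0 Config.initial.hand,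
        Config.initial.done⟩ := by
      rw [show (10*0+1:ℕ) = 0+1 from by omega, run_succ]
      unfold next
      rw [if_pos rfl]
      rfl
    rw [h1]
    constructor
    · funext k
      simp only [Config.initial, pAfter]
      rw [if_neg (by omega)]
    · simp [Config.initial]
  | succ q ih =>
    intro h
    exact (block_all v b q (by omega) (ih (by omega)).1 (ih (by omega)).2).1

lemma run_final (v : ℕ) (b : ℕ → Bool) :
    run v b (10*v+2) = ⟨Function.update (Function.update (run v b (10*v+1)).played (2*v+1) 1)
        (2*v+1) 2,
      (run v b (10*v+1)).hand.erase 0,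
      insert 0 (insert (10*v+1) (run v b (10*v+1)).done)⟩ := by
  rw [show (10*v+2:ℕ) = (10*v+1)+1 from by omega, run_succ]
  unfold next
  rw [if_neg (by omega), show ((10*v+1)-1)/10 = v from by omega, if_pos rfl]

lemma steps (v : ℕ) (b : ℕ → Bool) :
    ∀ i < 10*v+2, Step (sigma1 v) 2 i (run v b i) (run v b (i+1)) := by
  intro i hi
  rcases Nat.eq_zero_or_pos i with rfl | hpos
  · have h1 : run v b (0+1) = ⟨Config.initial.played, insert 0 Config.initial.hand,
        Config.initial.done⟩ := by
      rw [run_succ]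
      unfold next
      rw [if_pos rfl]
      rfl
    rw [h1]
    refine Step.store _ ?_
    show (insert 0 Config.initial.hand).card ≤ 2
    simp [Config.initial]
  · rcases Nat.lt_or_ge i (10*v+1) with hlt | hge
    · have hqv : (i-1)/10 < v := by omega
      obtain ⟨hP, hH⟩ := inv v b ((i-1)/10) (by omega)
      have hs := (block_all v b ((i-1)/10) hqv hP hH).2 ((i-1)%10) (by omega)
      rw [show i = 10*((i-1)/10)+1+((i-1)%10) from by omega]
      exact hs
    · have hiv : i = 10*v+1 := by omega
      subst hiv
      obtain ⟨hP, hH⟩ := inv v b v le_rfl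
      rw [show (10*v+1+1:ℕ) = 10*v+2 from by omega, run_final]
      refine Step.playNow _ _ ?_ ?_
      · rw [nth_last v, hP]
        show pAfter b v (2*v+1) + 1 = 1
        unfold pAfter
        rw [if_neg (by omega)]
      · rw [nth_last v]
        refine PlayFromHand.play _ _ 0 ?_ ?_ ?_
        · show 0 ∈ (run v b (10*v+1)).hand
          rw [hH]
          exact Finset.mem_singleton_self 0
        · rw [nth_zero v]
          simp [Function.update]
        · rw [nth_zero v]
          exact PlayFromHand.refl _

/-- For every truth assignment `b` there is a play sequence of `σ₁`
with hand size 2 that plays values 1 and 2 of the dummy color `2v+1` and, for each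
`1 ≤ i ≤ v`, plays values `1,…,5` of color `2i-1` and value 1 of color `2i` if
`b i = true`, and plays values `1,…,5` of color `2i` and value 1 of color `2i-1` if
`b i = false`. -/
theorem sigma1_assignment_play
    (v : ℕ) (hv : 1 ≤ v) (b : ℕ → Bool) :
    ∃ ps : PlaySeq (sigma1 v) 2 Config.initial,
      2 ≤ ps.final.played (2*v+1) ∧
      ∀ i, 1 ≤ i → i ≤ v →
        (b i = true → 5 ≤ ps.final.played (2*i-1) ∧ 1 ≤ ps.final.played (2*i)) ∧
        (b i = false → 5 ≤ ps.final.played (2*i) ∧ 1 ≤ ps.final.played (2*i-1)) := by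
  obtain ⟨hP, hH⟩ := inv v b v le_rfl
  refine ⟨⟨run v b, rfl, fun i hi => steps v b i (by rwa [length_sigma1] at hi)⟩, ?_, ?_⟩
  · show 2 ≤ (run v b (sigma1 v).length).played (2*v+1)
    rw [length_sigma1, run_final]
    dsimp only
    rw [Function.update_self]
  · intro i h1i hiv
    have hgoal : ∀ k, k ≠ 2*v+1 →
        (run v b (sigma1 v).length).played k = pAfter b v k := by
      intro k hk
      rw [length_sigma1, run_final]
      dsimp only
      rw [Function.update_of_ne hk, Function.update_of_ne hk, hP]
    constructor
    · intro hbi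
      constructor
      · show 5 ≤ (run v b (sigma1 v).length).played (2*i-1)
        rw [hgoal (2*i-1) (by omega)]
        unfold pAfter finVal
        rw [if_pos (by omega), if_pos (by omega), show (2*i-1+1)/2 = i from by omega, hbi]
        simp
      · show 1 ≤ (run v b (sigma1 v).length).played (2*i)
        rw [hgoal (2*i) (by omega)]
        unfold pAfter finVal
        rw [if_pos (by omega), if_neg (by omega), show (2*i)/2 = i from by omega, hbi]
        simp
    · intro hbi
      constructor
      · show 5 ≤ (run v b (sigma1 v).length).played (2*i)
        rw [hgoal (2*i) (by omega)]
        unfold pAfter finVal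
        rw [if_pos (by omega), if_neg (by omega), show (2*i)/2 = i from by omega, hbi]
        simp
      · show 1 ≤ (run v b (sigma1 v).length).played (2*i-1)
        rw [hgoal (2*i-1) (by omega)]
        unfold pAfter finVal
        rw [if_pos (by omega), if_pos (by omega), show (2*i-1+1)/2 = i from by omega, hbi]
        simp
end

section
/- Fix v ≥ 1, a clause index j with offset o_j = 5(j−1), three distinct associated colors k¹,k²,k³ ∈ {1,…,2v}, a dummy progress value e, and the clause gadget C_j over 2v+1 colors. Let k ≤ 2v be any color and consider processing C_j with hand size 2 from a configuration with empty hand in which the dummy color 2v+1 has been played exactly up to value e−1 and color k has been played exactly up to value o_j+5. Then among play sequences over C_j from this configuration that play all three dummy-color cards of C_j, there is one that additionally plays the cards of values o_j+6, o_j+7, o_j+8, o_j+9, o_j+10 of color k, and no such play sequence plays any card of color k of value greater than o_j+10. -/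
/-- Values `o+6,…,o+10` of (associated) color `k`. -/
def assocRun (o k : ℕ) : List Card :=
  [(o+6, k), (o+7, k), (o+8, k), (o+9, k), (o+10, k)]

/-- Values `o+5,…,o+10, o+2, o+3, o+4` of (non-associated) color `k`, in this order. -/
def nonAssocRun (o k : ℕ) : List Card :=
  [(o+5, k), (o+6, k), (o+7, k), (o+8, k), (o+9, k), (o+10, k), (o+2, k), (o+3, k), (o+4, k)]

/-- Values `o+2, o+4, o+5, o+6` of color `k`, in this order. -/
def tailRun (o k : ℕ) : List Card :=
  [(o+2, k), (o+4, k), (o+5, k), (o+6, k)]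

/-- The clause gadget `C_j` over `2v+1` colors, with offset `o = o_j`, dummy progress
value `e`, dummy color `2v+1` and associated colors `k₁, k₂, k₃`: (i) values
`o+6,…,o+10` of each associated color; (ii) for each non-associated color
`k ∈ {1,…,2v}`, values `o+5,…,o+10, o+2, o+3, o+4` of color `k`; (iii) the dummy cards
`(e+1, 2v+1), (e+2, 2v+1), (e, 2v+1)`; (iv) the cards `(o+3,k₁), (o+3,k₂), (o+3,k₃)`
followed by values `o+2, o+4, o+5, o+6` of `k₁`, then of `k₂`, then of `k₃`. -/
def clauseGadget (v o e k1 k2 k3 : ℕ) : List Card :=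
  assocRun o k1 ++ assocRun o k2 ++ assocRun o k3 ++
  ((List.range (2*v)).flatMap fun idx =>
    if idx + 1 = k1 ∨ idx + 1 = k2 ∨ idx + 1 = k3 then [] else nonAssocRun o (idx + 1)) ++
  [(e+1, 2*v+1), (e+2, 2*v+1), (e, 2*v+1)] ++
  [(o+3, k1), (o+3, k2), (o+3, k3)] ++ tailRun o k1 ++ tailRun o k2 ++ tailRun o k3

/-! The run `o+6, …, o+10` of color `k` occurs in `C_j` before the dummy cards, either as an
associated run or inside the non-associated run of `k`, right after `(o+5, k)`. Playing it as
it is drawn and then storing the dummy cards `e+1, e+2` in the two hand slots until `e` arrives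
gives the required play. Conversely, the progress of a color only ever takes the value of a card
of that color, and no card of `C_j` of color `k ≤ 2v` has value above `o+10`.
-/

section UpperBound

variable {σ : List Card} {h k B : ℕ}

lemma nth_value_le_of_forall_mem (hk : k ≠ 0) (hσ : ∀ cd ∈ σ, cd.2 = k → cd.1 ≤ B)
    (i : ℕ) (hi : (nth σ i).2 = k) : (nth σ i).1 ≤ B := by
  by_cases hlt : i < σ.length
  · rw [nth, List.getD_eq_getElem _ _ hlt] at hi ⊢
    exact hσ _ (List.getElem_mem hlt) hi
  · rw [nth, List.getD_eq_default _ _ (not_lt.mp hlt)] at hi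
    exact absurd hi.symm hk

lemma update_played_le (hB : ∀ i, (nth σ i).2 = k → (nth σ i).1 ≤ B) {p : ℕ → ℕ}
    (hp : p k ≤ B) (i : ℕ) : Function.update p (nth σ i).2 (nth σ i).1 k ≤ B := by
  rw [Function.update_apply]
  split_ifs with hi
  exacts [hB i hi.symm, hp]

lemma PlayFromHand.played_le (hB : ∀ i, (nth σ i).2 = k → (nth σ i).1 ≤ B) {c c' : Config}
    (hp : PlayFromHand σ c c') (hc : c.played k ≤ B) : c'.played k ≤ B := by
  induction hp with
  | refl => exact hc
  | play _ _ j _ _ _ ih => exact ih (update_played_le hB hc j)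

lemma Step.played_le (hB : ∀ i, (nth σ i).2 = k → (nth σ i).1 ≤ B) {i : ℕ} {c c' : Config}
    (hs : Step σ h i c c') (hc : c.played k ≤ B) : c'.played k ≤ B := by
  cases hs with
  | discard => exact hc
  | store => exact hc
  | playNow _ _ htail => exact htail.played_le hB (update_played_le hB hc i)

lemma PlaySeq.final_played_le (hB : ∀ i, (nth σ i).2 = k → (nth σ i).1 ≤ B) {start : Config}
    (ps : PlaySeq σ h start) (hstart : start.played k ≤ B) : ps.final.played k ≤ B := by
  suffices ∀ i ≤ σ.length, (ps.cfgs i).played k ≤ B from this _ le_rfl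
  intro i
  induction i with
  | zero => exact fun _ => by rw [ps.init]; exact hstart
  | succ i ih => exact fun hi => (ps.step i hi).played_le hB (ih (by omega))

end UpperBound

/-- Unlike play sequences, which start at position 0, chains of moves compose. -/
def Advance (σ : List Card) (h : ℕ) (x y : ℕ × Config) : Prop :=
  y.1 = x.1 + 1 ∧ Step σ h x.1 x.2 y.2

open Relation

section Reachability

variable {σ : List Card} {h : ℕ}

lemma exists_configs_of_reflTransGen_advance {x y : ℕ × Config}
    (hxy : ReflTransGen (Advance σ h) x y) :
    x.1 ≤ y.1 ∧ ∃ f : ℕ → Config, f x.1 = x.2 ∧ f y.1 = y.2 ∧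
      ∀ i, x.1 ≤ i → i < y.1 → Step σ h i (f i) (f (i + 1)) := by
  induction hxy using ReflTransGen.head_induction_on with
  | refl => exact ⟨le_rfl, fun _ => y.2, rfl, rfl, fun i hi hi' => absurd hi' (by omega)⟩
  | @head x z hxz _ ih =>
    obtain ⟨hz, hstep⟩ := hxz
    obtain ⟨hzy, f, hfz, hfy, hf⟩ := ih
    refine ⟨by omega, Function.update f x.1 x.2, by simp, ?_, fun i hi hi' => ?_⟩
    · rw [Function.update_of_ne (by omega), hfy]
    · rcases hi.eq_or_lt with rfl | hlt
      · rw [Function.update_self, Function.update_of_ne (by omega), ← hz, hfz]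
        exact hstep
      · rw [Function.update_of_ne (by omega), Function.update_of_ne (by omega)]
        exact hf i (by omega) hi'

lemma PlaySeq.exists_final_eq {start fin : Config}
    (hreach : ReflTransGen (Advance σ h) (0, start) (σ.length, fin)) :
    ∃ ps : PlaySeq σ h start, ps.final = fin := by
  obtain ⟨-, f, hf0, hfin, hf⟩ := exists_configs_of_reflTransGen_advance hreach
  exact ⟨⟨f, hf0, fun i hi => hf i (Nat.zero_le i) hi⟩, hfin⟩

lemma reflTransGen_advance_discard {a b : ℕ} (hab : a ≤ b) (c : Config) :
    ReflTransGen (Advance σ h) (a, c) (b, c) := by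
  obtain ⟨n, rfl⟩ := Nat.exists_eq_add_of_le hab
  clear hab
  induction n with
  | zero => exact ReflTransGen.refl
  | succ n ih => exact ih.tail ⟨rfl, Step.discard c⟩

lemma reflTransGen_advance_playRun {col s r a : ℕ} {p : ℕ → ℕ} {H d : Finset ℕ}
    (hrun : ∀ m < r, nth σ (a + m) = (s + 1 + m, col)) (hp : p col = s) :
    ∃ d', ReflTransGen (Advance σ h) (a, ⟨p, H, d⟩)
      (a + r, ⟨Function.update p col (s + r), H, d'⟩) := by
  induction r with
  | zero => exact ⟨d, by simpa [← hp] using ReflTransGen.refl⟩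
  | succ r ih =>
    obtain ⟨d', hd'⟩ := ih fun m hm => hrun m (by omega)
    have hcard : nth σ (a + r) = (s + 1 + r, col) := hrun r (by omega)
    refine ⟨insert (a + r) d', hd'.tail ⟨rfl, Step.playNow _ _ ?_ ?_⟩⟩
    · rw [hcard]; simp only [Function.update_self]; omega
    · rw [hcard, Function.update_idem, show s + 1 + r = s + (r + 1) by omega]
      exact PlayFromHand.refl _

lemma reflTransGen_advance_descending_triple {a e D : ℕ} {p : ℕ → ℕ} {d : Finset ℕ}
    (hh : 2 ≤ h) (hc0 : nth σ a = (e + 1, D)) (hc1 : nth σ (a + 1) = (e + 2, D))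
    (hc2 : nth σ (a + 2) = (e, D)) (hp : p D + 1 = e) :
    ∃ d', ReflTransGen (Advance σ h) (a, ⟨p, ∅, d⟩)
      (a + 3, ⟨Function.update p D (e + 2), ∅, d'⟩) := by
  have store0 : Advance σ h (a, ⟨p, ∅, d⟩) (a + 1, ⟨p, {a}, d⟩) :=
    ⟨rfl, Step.store _ (by rw [Finset.insert_empty, Finset.card_singleton]; omega)⟩
  have store1 : Advance σ h (a + 1, ⟨p, {a}, d⟩) (a + 2, ⟨p, {a + 1, a}, d⟩) :=
    ⟨rfl, Step.store _ ((Finset.card_insert_le _ _).trans (by simpa using hh))⟩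
  have release : PlayFromHand σ
      ⟨Function.update p D e, {a + 1, a}, insert (a + 2) d⟩
      ⟨Function.update p D (e + 2), ∅, insert (a + 1) (insert a (insert (a + 2) d))⟩ := by
    refine .play _ _ a (by simp) (by simp [hc0]) ?_
    rw [hc0]
    refine .play _ _ (a + 1) (by simp) (by simp [hc1]) ?_
    have hempty : (({a + 1, a} : Finset ℕ).erase a).erase (a + 1) = ∅ := by
      ext x
      simp only [Finset.mem_erase, Finset.mem_insert, Finset.mem_singleton, Finset.notMem_empty,
        iff_false]
      omega
    simpa [hc1, hempty, Function.update_idem] using PlayFromHand.refl _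
  have play2 : Advance σ h (a + 2, ⟨p, {a + 1, a}, d⟩)
      (a + 3, ⟨Function.update p D (e + 2), ∅, _⟩) :=
    ⟨rfl, Step.playNow _ _ (by rw [hc2]; exact hp) (by rw [hc2]; exact release)⟩
  exact ⟨_, .tail (.tail (.single store0) store1) play2⟩

end Reachability

lemma nth_append_length_add (pre rest : List Card) (m : ℕ) :
    nth (pre ++ rest) (pre.length + m) = nth rest m := by
  rw [nth, nth, List.getD_append_right _ _ _ _ (Nat.le_add_right _ _), Nat.add_sub_cancel_left]

lemma exists_playSeq_run_then_descending_triple {σ pre mid post : List Card}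
    {h o e k D : ℕ} {p : ℕ → ℕ}
    (hσ : σ = pre ++ assocRun o k ++ mid ++ [(e + 1, D), (e + 2, D), (e, D)] ++ post)
    (hh : 2 ≤ h) (hkD : k ≠ D) (hpk : p k = o + 5) (hpD : p D + 1 = e) :
    ∃ ps : PlaySeq σ h ⟨p, ∅, ∅⟩,
      ps.final.played D = e + 2 ∧ ps.final.played k = o + 10 := by
  set a := pre.length
  set b := a + 5 + mid.length
  have hrun : ∀ m < 5, nth σ (a + m) = (o + 5 + 1 + m, k) := by
    intro m hm
    rw [hσ, List.append_assoc, List.append_assoc, List.append_assoc, nth_append_length_add]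
    interval_cases m <;> rfl
  have hb : b = (pre ++ assocRun o k ++ mid).length := by simp only [List.length_append]; rfl
  have htriple : ∀ m, nth σ (b + m) = nth ([(e + 1, D), (e + 2, D), (e, D)] ++ post) m := by
    intro m
    rw [hσ, hb, List.append_assoc _ _ post, nth_append_length_add]
  have hlen : b + 3 ≤ σ.length := by
    rw [hb, hσ]
    simp only [List.length_append, List.length_cons, List.length_nil]
    omega
  obtain ⟨d₁, hplayRun⟩ :=
    reflTransGen_advance_playRun (h := h) (H := ∅) (d := ∅) hrun hpk
  obtain ⟨d₂, hplayTriple⟩ :=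
    reflTransGen_advance_descending_triple (p := Function.update p k (o + 5 + 5)) (d := d₁) hh
      (by simpa [nth] using htriple 0) (htriple 1) (htriple 2)
      (by rwa [Function.update_of_ne hkD.symm])
  obtain ⟨ps, hps⟩ := PlaySeq.exists_final_eq <|
    (reflTransGen_advance_discard (Nat.zero_le a) _).trans <|
    hplayRun.trans <| (reflTransGen_advance_discard (Nat.le_add_right _ mid.length) _).trans <|
    hplayTriple.trans <| reflTransGen_advance_discard hlen _
  refine ⟨ps, ?_, ?_⟩ <;> simp [hps, hkD]

lemma clauseGadget_value_le {v o e k1 k2 k3 : ℕ} {cd : Card}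
    (hcd : cd ∈ clauseGadget v o e k1 k2 k3) (hcol : cd.2 ≠ 2*v+1) : cd.1 ≤ o + 10 := by
  obtain ⟨a, b⟩ := cd
  simp only [clauseGadget, assocRun, nonAssocRun, tailRun, List.append_assoc, List.mem_append,
    List.mem_flatMap, mem_ite, List.mem_cons, List.not_mem_nil, or_false, Prod.mk.injEq]
    at hcd hcol ⊢
  rcases hcd with h | h | h | ⟨i, -, hnot, hrun⟩ | h
  all_goals first | omega | have := hrun hnot; omega

lemma assocRun_infix_runs {o k k1 k2 k3 n : ℕ} (hk : 1 ≤ k ∧ k ≤ n) :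
    assocRun o k <:+: assocRun o k1 ++ assocRun o k2 ++ assocRun o k3 ++
      (List.range n).flatMap fun idx =>
        if idx + 1 = k1 ∨ idx + 1 = k2 ∨ idx + 1 = k3 then [] else nonAssocRun o (idx + 1) := by
  by_cases h1 : k = k1
  · subst h1
    exact List.infix_append_left.trans (List.infix_append_left.trans List.infix_append_left)
  by_cases h2 : k = k2
  · subst h2; exact (List.infix_append _ _ _).trans List.infix_append_left
  by_cases h3 : k = k3
  · subst h3; exact List.infix_append _ _ _
  have hmem : nonAssocRun o k ∈ (List.range n).map fun idx =>
      if idx + 1 = k1 ∨ idx + 1 = k2 ∨ idx + 1 = k3 then [] else nonAssocRun o (idx + 1) :=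
    List.mem_map.mpr ⟨k - 1, List.mem_range.mpr (by omega), by
      rw [Nat.sub_add_cancel hk.1, if_neg (by tauto)]⟩
  exact (List.infix_append [(o + 5, k)] _ [(o + 2, k), (o + 3, k), (o + 4, k)]).trans <|
    (List.infix_of_mem_flatten hmem).trans List.infix_append_right

lemma clauseGadget_eq_assocRun_then_dummy (v o e k1 k2 k3 : ℕ) {k : ℕ}
    (hk : 1 ≤ k ∧ k ≤ 2 * v) :
    ∃ pre mid post, clauseGadget v o e k1 k2 k3 = pre ++ assocRun o k ++ mid ++
      [(e + 1, 2 * v + 1), (e + 2, 2 * v + 1), (e, 2 * v + 1)] ++ post := by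
  obtain ⟨pre, mid, hsplit⟩ := assocRun_infix_runs (o := o) (k1 := k1) (k2 := k2) (k3 := k3) hk
  refine ⟨pre, mid, [(o + 3, k1), (o + 3, k2), (o + 3, k3)] ++ tailRun o k1 ++ tailRun o k2 ++
    tailRun o k3, ?_⟩
  rw [clauseGadget, ← hsplit]
  simp only [List.append_assoc]

theorem clauseGadget_advanced_color_general
    (v j e : ℕ) (he : 1 ≤ e)
    (k1 k2 k3 : ℕ)
    (k : ℕ) (hk : 1 ≤ k ∧ k ≤ 2*v)
    (p0 : ℕ → ℕ) (hp0d : p0 (2*v+1) = e - 1) (hp0k : p0 k = 5*(j-1) + 5) :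
    (∃ ps : PlaySeq (clauseGadget v (5*(j-1)) e k1 k2 k3) 2 ⟨p0, ∅, ∅⟩,
        e + 2 ≤ ps.final.played (2*v+1) ∧
        5*(j-1) + 10 ≤ ps.final.played k) ∧
    (∀ ps : PlaySeq (clauseGadget v (5*(j-1)) e k1 k2 k3) 2 ⟨p0, ∅, ∅⟩,
        e + 2 ≤ ps.final.played (2*v+1) →
        ps.final.played k ≤ 5*(j-1) + 10) := by
  have hkD : k ≠ 2 * v + 1 := by omega
  refine ⟨?_, fun ps _ => ps.final_played_le ?_ (by simp [hp0k])⟩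
  · obtain ⟨pre, mid, post, hσ⟩ :=
      clauseGadget_eq_assocRun_then_dummy v (5*(j-1)) e k1 k2 k3 hk
    obtain ⟨ps, hD, hK⟩ :=
      exists_playSeq_run_then_descending_triple hσ le_rfl hkD hp0k (by omega)
    exact ⟨ps, hD.ge, hK.ge⟩
  · exact nth_value_le_of_forall_mem (by omega) fun cd hcd hcol =>
      clauseGadget_value_le hcd (hcol ▸ hkD)

/-- Let `k ≤ 2v` be any color and process `C_j` (offset `o = 5(j-1)`)
with hand size 2 from a configuration with empty hand where the dummy color has been
played exactly up to `e-1` and color `k` exactly up to `o+5`. Among play sequences from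
this configuration playing all three dummy cards, some one also plays values
`o+6,…,o+10` of color `k`, and none plays a card of color `k` of value `> o+10`. -/
theorem clauseGadget_advanced_color
    (v j e : ℕ) (hv : 1 ≤ v) (hj : 1 ≤ j) (he : 1 ≤ e)
    (k1 k2 k3 : ℕ)
    (hk1 : 1 ≤ k1 ∧ k1 ≤ 2*v) (hk2 : 1 ≤ k2 ∧ k2 ≤ 2*v) (hk3 : 1 ≤ k3 ∧ k3 ≤ 2*v)
    (hne : k1 ≠ k2 ∧ k1 ≠ k3 ∧ k2 ≠ k3)
    (k : ℕ) (hk : 1 ≤ k ∧ k ≤ 2*v)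
    (p0 : ℕ → ℕ) (hp0d : p0 (2*v+1) = e - 1) (hp0k : p0 k = 5*(j-1) + 5) :
    (∃ ps : PlaySeq (clauseGadget v (5*(j-1)) e k1 k2 k3) 2 ⟨p0, ∅, ∅⟩,
        e + 2 ≤ ps.final.played (2*v+1) ∧
        5*(j-1) + 10 ≤ ps.final.played k) ∧
    (∀ ps : PlaySeq (clauseGadget v (5*(j-1)) e k1 k2 k3) 2 ⟨p0, ∅, ∅⟩,
        e + 2 ≤ ps.final.played (2*v+1) →
        ps.final.played k ≤ 5*(j-1) + 10) :=
  clauseGadget_advanced_color_general v j e he k1 k2 k3 k hk p0 hp0d hp0k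
end

section
/- Fix v ≥ 1, a clause index j with offset o_j = 5(j−1), three distinct associated colors k¹,k²,k³ ∈ {1,…,2v}, a dummy progress value e, and the clause gadget C_j over 2v+1 colors. Let k ≤ 2v be any color not among the associated colors and consider processing C_j with hand size 2 from a configuration with empty hand in which the dummy color 2v+1 has been played exactly up to value e−1 and color k has been played exactly up to value o_j+1. Then among play sequences over C_j from this configuration that play all three dummy-color cards of C_j, there is one that additionally plays the cards of values o_j+2, o_j+3, o_j+4, o_j+5, o_j+6 of color k, and no such play sequence plays any card of color k of value greater than o_j+6. -/
def kvals : List ℕ := [5,6,7,8,9,10,2,3,4]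

structure KInv (o k p b : ℕ) (cfg : Config) : Prop where
  handSub : cfg.hand ⊆ Finset.range b
  doneSub : cfg.done ⊆ Finset.range b
  handCard : cfg.hand.card ≤ 2
  lo : o+1 ≤ cfg.played k
  hi : cfg.played k ≤ o+6
  d6 : o+2 ≤ cfg.played k → p+6 ∈ cfg.done
  d7 : o+3 ≤ cfg.played k → p+7 ∈ cfg.done
  d8 : o+4 ≤ cfg.played k → p+8 ∈ cfg.done
  d0 : o+5 ≤ cfg.played k → p ∈ cfg.done
  d1 : o+6 ≤ cfg.played k → p+1 ∈ cfg.done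
  r0 : p ∈ cfg.done → o+5 ≤ cfg.played k
  r1 : p+1 ∈ cfg.done → o+6 ≤ cfg.played k
  n2 : p+2 ∉ cfg.done
  scount : (({p, p+1, p+2} : Finset ℕ) ∩ (cfg.hand ∪ cfg.done)).card ≤ 2

lemma KInv.mono {o k p b b' : ℕ} {cfg : Config} (h : KInv o k p b cfg) (hb : b ≤ b') :
    KInv o k p b' cfg :=
  { h with handSub := h.handSub.trans (Finset.range_subset_range.2 hb),
           doneSub := h.doneSub.trans (Finset.range_subset_range.2 hb) }

lemma scount_play {p q : ℕ} {hand done : Finset ℕ}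
    (hsc : (({p, p+1, p+2} : Finset ℕ) ∩ (hand ∪ done)).card ≤ 2)
    (hq : q ∈ hand ∨ q ∉ ({p, p+1, p+2} : Finset ℕ)) :
    (({p, p+1, p+2} : Finset ℕ) ∩ (hand.erase q ∪ insert q done)).card ≤ 2 := by
  refine le_trans (Finset.card_le_card ?_) hsc
  intro x hx
  simp only [Finset.mem_inter, Finset.mem_union, Finset.mem_erase, Finset.mem_insert] at hx ⊢
  obtain ⟨hxs, hx⟩ := hx
  refine ⟨hxs, ?_⟩
  rcases hx with ⟨_, hx⟩ | hx
  · exact Or.inl hx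
  · rcases hx with rfl | hx
    · rcases hq with hq | hq
      · exact Or.inl hq
      · exact absurd (by simpa using hxs) hq
    · exact Or.inr hx

lemma KInv.play {σ : List Card} {o k p b q : ℕ}
    (Hcol : ∀ q', (nth σ q').2 = k → p ≤ q' ∧ q' < p + 9)
    (Hval : ∀ m, m < 9 → nth σ (p+m) = (o + kvals.getD m 0, k))
    {cfg : Config} (hI : KInv o k p b cfg)
    (hqb : q < b)
    (hmem : q ∈ cfg.hand ∨ (cfg.hand ⊆ Finset.range q ∧ cfg.done ⊆ Finset.range q))
    (hplay : cfg.played (nth σ q).2 + 1 = (nth σ q).1) :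
    KInv o k p b ⟨Function.update cfg.played (nth σ q).2 (nth σ q).1,
      cfg.hand.erase q, insert q cfg.done⟩ := by
  have hS3 : ({p, p+1, p+2} : Finset ℕ).card = 3 := by
    rw [Finset.card_insert_of_notMem (by simp), Finset.card_insert_of_notMem (by simp),
      Finset.card_singleton]
  by_cases hc : (nth σ q).2 = k
  · obtain ⟨hq1, hq2⟩ := Hcol q hc
    obtain ⟨m, rfl⟩ : ∃ m, q = p + m := ⟨q - p, by omega⟩
    have hm9 : m < 9 := by omega
    have hv := Hval m hm9
    have h1 : (nth σ (p+m)).1 = o + kvals.getD m 0 := by rw [hv]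
    rw [h1, hc] at hplay ⊢
    interval_cases m <;>
      simp only [kvals, List.getD_cons_zero, List.getD_cons_succ] at hplay ⊢
    -- m = 0 : value o+5
    · have hpl : cfg.played k = o + 4 := by omega
      have h8 : p + 8 ∈ cfg.done := hI.d8 (by omega)
      rcases hmem with hqh | ⟨_, hdr⟩
      swap
      · exact absurd (Finset.mem_range.1 (hdr h8)) (by omega)
      have hupd : Function.update cfg.played k (o+5) k = o+5 := Function.update_self _ _ _
      refine { handSub := (Finset.erase_subset _ _).trans hI.handSub,
               doneSub := Finset.insert_subset (Finset.mem_range.2 hqb) hI.doneSub,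
               handCard := (Finset.card_le_card (Finset.erase_subset _ _)).trans hI.handCard,
               lo := by simp only [hupd]; omega, hi := by simp only [hupd]; omega,
               d6 := fun _ => Finset.mem_insert_of_mem (hI.d6 (by omega)),
               d7 := fun _ => Finset.mem_insert_of_mem (hI.d7 (by omega)),
               d8 := fun _ => Finset.mem_insert_of_mem h8,
               d0 := fun _ => by simp,
               d1 := fun h => by simp only [hupd] at h; omega,
               r0 := fun _ => by simp only [hupd]; omega,
               r1 := fun h => ?_, n2 := ?_,
               scount := scount_play hI.scount (Or.inl hqh) }
      · rcases Finset.mem_insert.1 h with h | h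
        · omega
        · exact absurd (hI.r1 h) (by omega)
      · intro h
        rcases Finset.mem_insert.1 h with h | h
        · omega
        · exact hI.n2 h
    -- m = 1 : value o+6
    · have hpl : cfg.played k = o + 5 := by omega
      have h8 : p + 8 ∈ cfg.done := hI.d8 (by omega)
      rcases hmem with hqh | ⟨_, hdr⟩
      swap
      · exact absurd (Finset.mem_range.1 (hdr h8)) (by omega)
      have hupd : Function.update cfg.played k (o+6) k = o+6 := Function.update_self _ _ _
      refine { handSub := (Finset.erase_subset _ _).trans hI.handSub,
               doneSub := Finset.insert_subset (Finset.mem_range.2 hqb) hI.doneSub,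
               handCard := (Finset.card_le_card (Finset.erase_subset _ _)).trans hI.handCard,
               lo := by simp only [hupd]; omega, hi := by simp only [hupd]; omega,
               d6 := fun _ => Finset.mem_insert_of_mem (hI.d6 (by omega)),
               d7 := fun _ => Finset.mem_insert_of_mem (hI.d7 (by omega)),
               d8 := fun _ => Finset.mem_insert_of_mem h8,
               d0 := fun _ => Finset.mem_insert_of_mem (hI.d0 (by omega)),
               d1 := fun _ => by simp,
               r0 := fun _ => by simp only [hupd]; omega,
               r1 := fun _ => by simp only [hupd]; omega, n2 := ?_,
               scount := scount_play hI.scount (Or.inl hqh) }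
      · intro h
        rcases Finset.mem_insert.1 h with h | h
        · omega
        · exact hI.n2 h
    -- m = 2 : value o+7, impossible
    · exfalso
      have hpl : cfg.played k = o + 6 := by omega
      have h0 : p ∈ cfg.done := hI.d0 (by omega)
      have h1' : p + 1 ∈ cfg.done := hI.d1 (by omega)
      rcases hmem with hqh | ⟨_, hdr⟩
      · have heq : ({p, p+1, p+2} : Finset ℕ) ∩ (cfg.hand ∪ cfg.done)
            = ({p, p+1, p+2} : Finset ℕ) := by
          refine Finset.inter_eq_left.2 ?_
          intro x hx
          simp only [Finset.mem_insert, Finset.mem_singleton] at hx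
          rcases hx with rfl | rfl | rfl
          · exact Finset.mem_union_right _ h0
          · exact Finset.mem_union_right _ h1'
          · exact Finset.mem_union_left _ hqh
        have := hI.scount
        rw [heq, hS3] at this
        omega
      · have h8 : p + 8 ∈ cfg.done := hI.d8 (by omega)
        exact absurd (Finset.mem_range.1 (hdr h8)) (by omega)
    -- m = 3,4,5 : impossible values
    · exact absurd hI.hi (by omega)
    · exact absurd hI.hi (by omega)
    · exact absurd hI.hi (by omega)
    -- m = 6 : value o+2
    · have hpl : cfg.played k = o + 1 := by omega
      have hupd : Function.update cfg.played k (o+2) k = o+2 := Function.update_self _ _ _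
      refine { handSub := (Finset.erase_subset _ _).trans hI.handSub,
               doneSub := Finset.insert_subset (Finset.mem_range.2 hqb) hI.doneSub,
               handCard := (Finset.card_le_card (Finset.erase_subset _ _)).trans hI.handCard,
               lo := by simp only [hupd]; omega, hi := by simp only [hupd]; omega,
               d6 := fun _ => by simp,
               d7 := fun h => by simp only [hupd] at h; omega,
               d8 := fun h => by simp only [hupd] at h; omega,
               d0 := fun h => by simp only [hupd] at h; omega,
               d1 := fun h => by simp only [hupd] at h; omega,
               r0 := fun h => ?_, r1 := fun h => ?_, n2 := ?_,
               scount := scount_play hI.scount (Or.inr (by simp only [Finset.mem_insert, Finset.mem_singleton]; omega)) }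
      · rcases Finset.mem_insert.1 h with h | h
        · omega
        · exact absurd (hI.r0 h) (by omega)
      · rcases Finset.mem_insert.1 h with h | h
        · omega
        · exact absurd (hI.r1 h) (by omega)
      · intro h
        rcases Finset.mem_insert.1 h with h | h
        · omega
        · exact hI.n2 h
    -- m = 7 : value o+3
    · have hpl : cfg.played k = o + 2 := by omega
      have hupd : Function.update cfg.played k (o+3) k = o+3 := Function.update_self _ _ _
      refine { handSub := (Finset.erase_subset _ _).trans hI.handSub,
               doneSub := Finset.insert_subset (Finset.mem_range.2 hqb) hI.doneSub,
               handCard := (Finset.card_le_card (Finset.erase_subset _ _)).trans hI.handCard,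
               lo := by simp only [hupd]; omega, hi := by simp only [hupd]; omega,
               d6 := fun _ => Finset.mem_insert_of_mem (hI.d6 (by omega)),
               d7 := fun _ => by simp,
               d8 := fun h => by simp only [hupd] at h; omega,
               d0 := fun h => by simp only [hupd] at h; omega,
               d1 := fun h => by simp only [hupd] at h; omega,
               r0 := fun h => ?_, r1 := fun h => ?_, n2 := ?_,
               scount := scount_play hI.scount (Or.inr (by simp only [Finset.mem_insert, Finset.mem_singleton]; omega)) }
      · rcases Finset.mem_insert.1 h with h | h
        · omega
        · exact absurd (hI.r0 h) (by omega)
      · rcases Finset.mem_insert.1 h with h | h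
        · omega
        · exact absurd (hI.r1 h) (by omega)
      · intro h
        rcases Finset.mem_insert.1 h with h | h
        · omega
        · exact hI.n2 h
    -- m = 8 : value o+4
    · have hpl : cfg.played k = o + 3 := by omega
      have hupd : Function.update cfg.played k (o+4) k = o+4 := Function.update_self _ _ _
      refine { handSub := (Finset.erase_subset _ _).trans hI.handSub,
               doneSub := Finset.insert_subset (Finset.mem_range.2 hqb) hI.doneSub,
               handCard := (Finset.card_le_card (Finset.erase_subset _ _)).trans hI.handCard,
               lo := by simp only [hupd]; omega, hi := by simp only [hupd]; omega,
               d6 := fun _ => Finset.mem_insert_of_mem (hI.d6 (by omega)),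
               d7 := fun _ => Finset.mem_insert_of_mem (hI.d7 (by omega)),
               d8 := fun _ => by simp,
               d0 := fun h => by simp only [hupd] at h; omega,
               d1 := fun h => by simp only [hupd] at h; omega,
               r0 := fun h => ?_, r1 := fun h => ?_, n2 := ?_,
               scount := scount_play hI.scount (Or.inr (by simp only [Finset.mem_insert, Finset.mem_singleton]; omega)) }
      · rcases Finset.mem_insert.1 h with h | h
        · omega
        · exact absurd (hI.r0 h) (by omega)
      · rcases Finset.mem_insert.1 h with h | h
        · omega
        · exact absurd (hI.r1 h) (by omega)
      · intro h
        rcases Finset.mem_insert.1 h with h | h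
        · omega
        · exact hI.n2 h
  · -- color ≠ k
    have hqp0 : q ≠ p := by rintro rfl; exact hc (by have h := Hval 0 (by norm_num); rw [Nat.add_zero] at h; rw [h])
    have hqp1 : q ≠ p+1 := by rintro rfl; exact hc (by rw [Hval 1 (by norm_num)])
    have hqp2 : q ≠ p+2 := by rintro rfl; exact hc (by rw [Hval 2 (by norm_num)])
    have hpk : Function.update cfg.played (nth σ q).2 (nth σ q).1 k = cfg.played k :=
      Function.update_of_ne (fun h => hc h.symm) _ _
    refine { handSub := (Finset.erase_subset _ _).trans hI.handSub,
             doneSub := Finset.insert_subset (Finset.mem_range.2 hqb) hI.doneSub,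
             handCard := (Finset.card_le_card (Finset.erase_subset _ _)).trans hI.handCard,
             lo := by simp only [hpk]; exact hI.lo, hi := by simp only [hpk]; exact hI.hi,
             d6 := fun h => by simp only [hpk] at h; exact Finset.mem_insert_of_mem (hI.d6 h),
             d7 := fun h => by simp only [hpk] at h; exact Finset.mem_insert_of_mem (hI.d7 h),
             d8 := fun h => by simp only [hpk] at h; exact Finset.mem_insert_of_mem (hI.d8 h),
             d0 := fun h => by simp only [hpk] at h; exact Finset.mem_insert_of_mem (hI.d0 h),
             d1 := fun h => by simp only [hpk] at h; exact Finset.mem_insert_of_mem (hI.d1 h),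
             r0 := fun h => ?_, r1 := fun h => ?_, n2 := ?_,
             scount := scount_play hI.scount (Or.inr (by simp only [Finset.mem_insert, Finset.mem_singleton]; omega)) }
    · rcases Finset.mem_insert.1 h with h | h
      · exact absurd h.symm hqp0
      · simp only [hpk]; exact hI.r0 h
    · rcases Finset.mem_insert.1 h with h | h
      · exact absurd h.symm hqp1
      · simp only [hpk]; exact hI.r1 h
    · intro h
      rcases Finset.mem_insert.1 h with h | h
      · exact hqp2 h.symm
      · exact hI.n2 h

lemma chain_KInv {σ : List Card} {o k p b : ℕ}
    (Hcol : ∀ q', (nth σ q').2 = k → p ≤ q' ∧ q' < p + 9)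
    (Hval : ∀ m, m < 9 → nth σ (p+m) = (o + kvals.getD m 0, k)) :
    ∀ {cfg cfg' : Config}, PlayFromHand σ cfg cfg' → KInv o k p b cfg → KInv o k p b cfg' := by
  intro cfg cfg' h
  induction h with
  | refl => exact id
  | play cfg cfg' j hj hplay htail ih =>
      intro hI
      exact ih (hI.play Hcol Hval (Finset.mem_range.1 (hI.handSub hj)) (Or.inl hj) hplay)

lemma step_KInv {σ : List Card} {o k p i : ℕ}
    (Hcol : ∀ q', (nth σ q').2 = k → p ≤ q' ∧ q' < p + 9)
    (Hval : ∀ m, m < 9 → nth σ (p+m) = (o + kvals.getD m 0, k))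
    {cfg cfg' : Config} (hI : KInv o k p i cfg) (hs : Step σ 2 i cfg cfg') :
    KInv o k p (i+1) cfg' := by
  cases hs with
  | discard => exact hI.mono (Nat.le_succ _)
  | store hsize =>
      have hsub : insert i cfg.hand ⊆ Finset.range (i+1) :=
        Finset.insert_subset (Finset.mem_range.2 (Nat.lt_succ_self i))
          (hI.handSub.trans (Finset.range_subset_range.2 (Nat.le_succ i)))
      refine { handSub := hsub,
               doneSub := hI.doneSub.trans (Finset.range_subset_range.2 (Nat.le_succ i)),
               handCard := hsize, lo := hI.lo, hi := hI.hi,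
               d6 := hI.d6, d7 := hI.d7, d8 := hI.d8, d0 := hI.d0, d1 := hI.d1,
               r0 := hI.r0, r1 := hI.r1, n2 := hI.n2, scount := ?_ }
      by_cases h0 : i = p
      · refine le_trans (Finset.card_le_card
          (show _ ⊆ ({p} : Finset ℕ) from ?_)) (by simp)
        intro x hx
        simp only [Finset.mem_inter, Finset.mem_union, Finset.mem_insert,
          Finset.mem_singleton] at hx ⊢
        obtain ⟨h1, h2⟩ := hx
        rcases h2 with (h2 | h2) | h2
        · omega
        · have := Finset.mem_range.1 (hI.handSub h2); omega
        · have := Finset.mem_range.1 (hI.doneSub h2); omega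
      by_cases h1 : i = p + 1
      · refine le_trans (Finset.card_le_card
          (show _ ⊆ ({p, p+1} : Finset ℕ) from ?_))
          (le_trans (Finset.card_insert_le _ _) (by simp))
        intro x hx
        simp only [Finset.mem_inter, Finset.mem_union, Finset.mem_insert,
          Finset.mem_singleton] at hx ⊢
        obtain ⟨hx1, hx2⟩ := hx
        rcases hx2 with (hx2 | hx2) | hx2
        · omega
        · have := Finset.mem_range.1 (hI.handSub hx2); omega
        · have := Finset.mem_range.1 (hI.doneSub hx2); omega
      by_cases h2 : i = p + 2
      · have hnp : p ∉ cfg.done := fun h => by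
          have := Finset.mem_range.1 (hI.doneSub (hI.d8 (le_trans (by omega) (hI.r0 h))))
          omega
        have hnp1 : p + 1 ∉ cfg.done := fun h => by
          have := Finset.mem_range.1 (hI.doneSub (hI.d8 (le_trans (by omega) (hI.r1 h))))
          omega
        refine le_trans (Finset.card_le_card
          (show _ ⊆ insert i cfg.hand from ?_)) hsize
        intro x hx
        simp only [Finset.mem_inter, Finset.mem_union, Finset.mem_insert,
          Finset.mem_singleton] at hx ⊢
        obtain ⟨hx1, hx2⟩ := hx
        rcases hx2 with (hx2 | hx2) | hx2
        · exact Or.inl hx2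
        · exact Or.inr hx2
        · exfalso; rcases hx1 with rfl | rfl | rfl
          exacts [hnp hx2, hnp1 hx2, hI.n2 hx2]
      · refine le_trans (Finset.card_le_card
          (show _ ⊆ ({p, p+1, p+2} : Finset ℕ) ∩ (cfg.hand ∪ cfg.done) from ?_)) hI.scount
        intro x hx
        simp only [Finset.mem_inter, Finset.mem_union, Finset.mem_insert,
          Finset.mem_singleton] at hx ⊢
        obtain ⟨hx1, hx2⟩ := hx
        refine ⟨hx1, ?_⟩
        rcases hx2 with (hx2 | hx2) | hx2
        · exfalso; omega
        · exact Or.inl hx2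
        · exact Or.inr hx2
  | playNow cfg' hplay htail =>
      have hnot : i ∉ cfg.hand := fun h => by
        have := Finset.mem_range.1 (hI.handSub h); omega
      have h1 : KInv o k p (i+1) ⟨Function.update cfg.played (nth σ i).2 (nth σ i).1,
          cfg.hand, insert i cfg.done⟩ := by
        have h2 := (hI.mono (Nat.le_succ i)).play Hcol Hval (Nat.lt_succ_self i)
          (Or.inr ⟨hI.handSub, hI.doneSub⟩) hplay
        rwa [Finset.erase_eq_of_notMem hnot] at h2
      exact chain_KInv Hcol Hval htail h1

lemma playseq_KInv {σ : List Card} {o k p : ℕ}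
    (Hcol : ∀ q', (nth σ q').2 = k → p ≤ q' ∧ q' < p + 9)
    (Hval : ∀ m, m < 9 → nth σ (p+m) = (o + kvals.getD m 0, k))
    {start : Config} (ps : PlaySeq σ 2 start) (h0 : KInv o k p 0 start) :
    ∀ i, i ≤ σ.length → KInv o k p i (ps.cfgs i) := by
  intro i
  induction i with
  | zero => intro _; rw [ps.init]; exact h0
  | succ n ih =>
      intro hn
      exact step_KInv Hcol Hval (ih (by omega)) (ps.step n (by omega))

lemma snd_of_mem_assocRun {cd : Card} {o c : ℕ} (h : cd ∈ assocRun o c) : cd.2 = c := by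
  simp only [assocRun, List.mem_cons, List.not_mem_nil, or_false] at h
  rcases h with rfl|rfl|rfl|rfl|rfl <;> rfl

lemma snd_of_mem_nonAssocRun {cd : Card} {o c : ℕ} (h : cd ∈ nonAssocRun o c) : cd.2 = c := by
  simp only [nonAssocRun, List.mem_cons, List.not_mem_nil, or_false] at h
  rcases h with rfl|rfl|rfl|rfl|rfl|rfl|rfl|rfl|rfl <;> rfl

lemma snd_of_mem_tailRun {cd : Card} {o c : ℕ} (h : cd ∈ tailRun o c) : cd.2 = c := by
  simp only [tailRun, List.mem_cons, List.not_mem_nil, or_false] at h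
  rcases h with rfl|rfl|rfl|rfl <;> rfl

lemma clauseGadget_decomp (v o e k1 k2 k3 k : ℕ) (hk1 : 1 ≤ k) (hk2v : k ≤ 2*v)
    (h1 : k ≠ k1) (h2 : k ≠ k2) (h3 : k ≠ k3) :
    ∃ L1 L2a : List Card,
      clauseGadget v o e k1 k2 k3 =
        L1 ++ nonAssocRun o k ++ (L2a ++ ([(e+1, 2*v+1), (e+2, 2*v+1), (e, 2*v+1)] ++
          ([(o+3, k1), (o+3, k2), (o+3, k3)] ++ tailRun o k1 ++ tailRun o k2 ++ tailRun o k3))) ∧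
      (∀ cd ∈ L1, cd.2 ≠ k) ∧ (∀ cd ∈ L2a, cd.2 ≠ k) := by
  classical
  obtain ⟨t, ht⟩ : ∃ t, 2*v = (k-1) + (1 + t) := ⟨2*v - k, by omega⟩
  have htk : ∀ x, k + x < 2*v → True := fun _ _ => trivial
  have hsplit : List.range (2*v) =
      List.range (k-1) ++ [k-1] ++ (List.range t).map (fun x => k + x) := by
    rw [ht, List.range_add, List.range_add, List.map_append, List.map_map,
      ← List.append_assoc]
    have e1 : List.map (fun x => k - 1 + x) (List.range 1) = [k-1] := by
      rw [show List.range 1 = [0] from by decide]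
      simp
    have e2 : List.map ((fun x => k - 1 + x) ∘ fun x => 1 + x) (List.range t)
        = List.map (fun x => k + x) (List.range t) :=
      List.map_congr_left (fun a _ => by simp [Function.comp]; omega)
    rw [e1, e2]
  have hkk : k - 1 + 1 = k := by omega
  refine ⟨assocRun o k1 ++ assocRun o k2 ++ assocRun o k3 ++
      ((List.range (k-1)).flatMap fun idx =>
        if idx + 1 = k1 ∨ idx + 1 = k2 ∨ idx + 1 = k3 then [] else nonAssocRun o (idx + 1)),
    (((List.range t).map (fun x => k + x)).flatMap fun idx =>
        if idx + 1 = k1 ∨ idx + 1 = k2 ∨ idx + 1 = k3 then [] else nonAssocRun o (idx + 1)),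
    ?_, ?_, ?_⟩
  · rw [clauseGadget, hsplit]
    rw [List.flatMap_append, List.flatMap_append, List.flatMap_cons, List.flatMap_nil,
      List.append_nil]
    beta_reduce
    rw [hkk, if_neg (by simp [h1, h2, h3])]
    simp only [List.append_assoc]
  · intro cd hcd
    simp only [List.mem_append, List.mem_flatMap, List.mem_range] at hcd
    rcases hcd with ((hcd | hcd) | hcd) | ⟨idx, hidx, hcd⟩
    · rw [snd_of_mem_assocRun hcd]; exact Ne.symm h1
    · rw [snd_of_mem_assocRun hcd]; exact Ne.symm h2
    · rw [snd_of_mem_assocRun hcd]; exact Ne.symm h3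
    · split_ifs at hcd with hcond
      · simp at hcd
      · rw [snd_of_mem_nonAssocRun hcd]; omega
  · intro cd hcd
    simp only [List.mem_flatMap, List.mem_map, List.mem_range] at hcd
    obtain ⟨idx, ⟨x, hx, rfl⟩, hcd⟩ := hcd
    split_ifs at hcd with hcond
    · simp at hcd
    · rw [snd_of_mem_nonAssocRun hcd]; omega

lemma nth_concat_at (A B : List Card) (m : ℕ) : nth (A ++ B) (A.length + m) = nth B m := by
  unfold nth
  rw [List.getD_append_right _ _ _ _ (by omega)]
  congr 1
  omega

lemma nth_append_lt (A B : List Card) (i : ℕ) (h : i < A.length) :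
    nth (A ++ B) i = nth A i := by
  unfold nth
  rw [List.getD_append _ _ _ _ h]

lemma nth_color_ne {L : List Card} {i k : ℕ} (h : ∀ cd ∈ L, cd.2 ≠ k) (hk : 1 ≤ k) :
    (nth L i).2 ≠ k := by
  by_cases hi : i < L.length
  · unfold nth
    rw [List.getD_eq_getElem _ _ hi]
    exact h _ (List.getElem_mem hi)
  · unfold nth
    rw [List.getD_eq_default _ _ (by omega)]
    show (0:ℕ) ≠ k
    omega

def doneS (p : ℕ) : Finset ℕ :=
  insert (p+1) (insert p (insert (p+8) (insert (p+7) (insert (p+6) (∅ : Finset ℕ)))))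

def stratCfgs (p0 : ℕ → ℕ) (k o e c p D : ℕ) : ℕ → Config := fun i =>
  if i ≤ p then ⟨p0, ∅, ∅⟩
  else if i ≤ p+1 then ⟨p0, insert p ∅, ∅⟩
  else if i ≤ p+6 then ⟨p0, insert (p+1) (insert p ∅), ∅⟩
  else if i ≤ p+7 then ⟨Function.update p0 k (o+2), insert (p+1) (insert p ∅),
    insert (p+6) ∅⟩
  else if i ≤ p+8 then ⟨Function.update p0 k (o+3), insert (p+1) (insert p ∅),
    insert (p+7) (insert (p+6) ∅)⟩
  else if i ≤ D then ⟨Function.update p0 k (o+6), ∅, doneS p⟩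
  else if i ≤ D+1 then ⟨Function.update p0 k (o+6), insert D ∅, doneS p⟩
  else if i ≤ D+2 then ⟨Function.update p0 k (o+6), insert (D+1) (insert D ∅), doneS p⟩
  else ⟨Function.update (Function.update p0 k (o+6)) c (e+2), ∅,
    insert (D+1) (insert D (insert (D+2) (doneS p)))⟩

set_option maxHeartbeats 1000000 in
/-- Let `k ≤ 2v` be a color not among the associated colors, and
process `C_j` (offset `o = 5(j-1)`) with hand size 2 from a configuration with empty
hand where the dummy color has been played exactly up to `e-1` and color `k` exactly up
to `o+1`. Among play sequences from this configuration playing all three dummy cards,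
some one also plays values `o+2,…,o+6` of color `k`, and none plays a card of color `k`
of value `> o+6`. -/
theorem clauseGadget_nonassociated_color
    (v j e : ℕ) (hv : 1 ≤ v) (hj : 1 ≤ j) (he : 1 ≤ e)
    (k1 k2 k3 : ℕ)
    (hk1 : 1 ≤ k1 ∧ k1 ≤ 2*v) (hk2 : 1 ≤ k2 ∧ k2 ≤ 2*v) (hk3 : 1 ≤ k3 ∧ k3 ≤ 2*v)
    (hne : k1 ≠ k2 ∧ k1 ≠ k3 ∧ k2 ≠ k3)
    (k : ℕ) (hk : 1 ≤ k ∧ k ≤ 2*v) (hknot : k ≠ k1 ∧ k ≠ k2 ∧ k ≠ k3)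
    (p0 : ℕ → ℕ) (hp0d : p0 (2*v+1) = e - 1) (hp0k : p0 k = 5*(j-1) + 1) :
    (∃ ps : PlaySeq (clauseGadget v (5*(j-1)) e k1 k2 k3) 2 ⟨p0, ∅, ∅⟩,
        e + 2 ≤ ps.final.played (2*v+1) ∧
        5*(j-1) + 6 ≤ ps.final.played k) ∧
    (∀ ps : PlaySeq (clauseGadget v (5*(j-1)) e k1 k2 k3) 2 ⟨p0, ∅, ∅⟩,
        e + 2 ≤ ps.final.played (2*v+1) →
        ps.final.played k ≤ 5*(j-1) + 6) := by
  obtain ⟨hklo, hkhi⟩ := hk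
  obtain ⟨hnk1, hnk2, hnk3⟩ := hknot
  set o : ℕ := 5*(j-1) with ho
  obtain ⟨L1, L2a, hσ, hL1, hL2a⟩ :=
    clauseGadget_decomp v o e k1 k2 k3 k hklo hkhi hnk1 hnk2 hnk3
  set σ : List Card := clauseGadget v o e k1 k2 k3 with hσdef
  set p : ℕ := L1.length with hp
  set D : ℕ := p + 9 + L2a.length with hD
  have h9 : (nonAssocRun o k).length = 9 := rfl
  -- value facts on the k-block
  have Hval : ∀ m, m < 9 → nth σ (p + m) = (o + kvals.getD m 0, k) := by
    intro m hm
    rw [hσ, List.append_assoc, hp, nth_concat_at, nth_append_lt _ _ _ (by omega)]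
    interval_cases m <;> rfl
  -- color-k cards occur only in the k-block
  have Hrest : ∀ cd ∈ (L2a ++ ([(e+1, 2*v+1), (e+2, 2*v+1), (e, 2*v+1)] ++
      ([(o+3, k1), (o+3, k2), (o+3, k3)] ++ tailRun o k1 ++ tailRun o k2 ++ tailRun o k3))),
      cd.2 ≠ k := by
    intro cd hcd
    rcases List.mem_append.1 hcd with h | hcd
    · exact hL2a _ h
    rcases List.mem_append.1 hcd with hcd | hcd
    · simp only [List.mem_cons, List.not_mem_nil, or_false] at hcd
      rcases hcd with rfl | rfl | rfl <;> (show 2*v+1 ≠ k; omega)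
    rcases List.mem_append.1 hcd with hcd | hcd
    swap
    · rw [snd_of_mem_tailRun hcd]; omega
    rcases List.mem_append.1 hcd with hcd | hcd
    swap
    · rw [snd_of_mem_tailRun hcd]; omega
    rcases List.mem_append.1 hcd with hcd | hcd
    swap
    · rw [snd_of_mem_tailRun hcd]; omega
    · simp only [List.mem_cons, List.not_mem_nil, or_false] at hcd
      rcases hcd with rfl | rfl | rfl
      · show k1 ≠ k; omega
      · show k2 ≠ k; omega
      · show k3 ≠ k; omega
  have Hcol : ∀ q, (nth σ q).2 = k → p ≤ q ∧ q < p + 9 := by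
    intro q hq
    rcases Nat.lt_or_ge q p with hlt | hge
    · exfalso
      rw [hσ, List.append_assoc, nth_append_lt _ _ _ (by omega)] at hq
      exact nth_color_ne hL1 hklo hq
    rcases Nat.lt_or_ge q (p + 9) with hlt9 | hge9
    · exact ⟨hge, hlt9⟩
    exfalso
    obtain ⟨m, rfl⟩ : ∃ m, q = L1.length + m := ⟨q - L1.length, by omega⟩
    rw [hσ, List.append_assoc, nth_concat_at] at hq
    obtain ⟨m', rfl⟩ : ∃ m', m = 9 + m' := ⟨m - 9, by omega⟩
    rw [show (9 : ℕ) + m' = (nonAssocRun o k).length + m' from by rw [h9], nth_concat_at] at hq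
    exact nth_color_ne Hrest hklo hq
  -- dummy card positions
  have Hdum : ∀ m, m < 3 → nth σ (D + m) =
      nth [(e+1, 2*v+1), (e+2, 2*v+1), (e, 2*v+1)] m := by
    intro m hm
    rw [hσ, List.append_assoc, show D + m = L1.length + (9 + (L2a.length + m)) from by omega, nth_concat_at,
      show (9 : ℕ) + (L2a.length + m) = (nonAssocRun o k).length + (L2a.length + m) from by
        rw [h9],
      nth_concat_at, nth_concat_at, nth_append_lt _ _ _ (by simp; omega)]
  have hlen : σ.length = D + 18 := by
    rw [hσ]
    simp [nonAssocRun, tailRun, List.length_append, hD, hp]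
    omega
  constructor
  · -- existence
    have E0 : ∀ {i}, i ≤ p → stratCfgs p0 k o e (2*v+1) p D i = ⟨p0, ∅, ∅⟩ := by
      intro i h; unfold stratCfgs; rw [if_pos h]
    have E1 : ∀ {i}, p < i → i ≤ p+1 →
        stratCfgs p0 k o e (2*v+1) p D i = ⟨p0, insert p ∅, ∅⟩ := by
      intro i h h'; unfold stratCfgs; rw [if_neg (by omega), if_pos h']
    have E2 : ∀ {i}, p+1 < i → i ≤ p+6 →
        stratCfgs p0 k o e (2*v+1) p D i = ⟨p0, insert (p+1) (insert p ∅), ∅⟩ := by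
      intro i h h'; unfold stratCfgs
      rw [if_neg (by omega), if_neg (by omega), if_pos h']
    have E3 : ∀ {i}, p+6 < i → i ≤ p+7 →
        stratCfgs p0 k o e (2*v+1) p D i = ⟨Function.update p0 k (o+2),
          insert (p+1) (insert p ∅), insert (p+6) ∅⟩ := by
      intro i h h'; unfold stratCfgs
      rw [if_neg (by omega), if_neg (by omega), if_neg (by omega), if_pos h']
    have E4 : ∀ {i}, p+7 < i → i ≤ p+8 →
        stratCfgs p0 k o e (2*v+1) p D i = ⟨Function.update p0 k (o+3),
          insert (p+1) (insert p ∅), insert (p+7) (insert (p+6) ∅)⟩ := by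
      intro i h h'; unfold stratCfgs
      rw [if_neg (by omega), if_neg (by omega), if_neg (by omega), if_neg (by omega),
        if_pos h']
    have E5 : ∀ {i}, p+8 < i → i ≤ D →
        stratCfgs p0 k o e (2*v+1) p D i = ⟨Function.update p0 k (o+6), ∅, doneS p⟩ := by
      intro i h h'; unfold stratCfgs
      rw [if_neg (by omega), if_neg (by omega), if_neg (by omega), if_neg (by omega),
        if_neg (by omega), if_pos h']
    have E6 : ∀ {i}, D < i → i ≤ D+1 →
        stratCfgs p0 k o e (2*v+1) p D i = ⟨Function.update p0 k (o+6), insert D ∅,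
          doneS p⟩ := by
      intro i h h'; unfold stratCfgs
      rw [if_neg (by omega), if_neg (by omega), if_neg (by omega), if_neg (by omega),
        if_neg (by omega), if_neg (by omega), if_pos h']
    have E7 : ∀ {i}, D+1 < i → i ≤ D+2 →
        stratCfgs p0 k o e (2*v+1) p D i = ⟨Function.update p0 k (o+6),
          insert (D+1) (insert D ∅), doneS p⟩ := by
      intro i h h'; unfold stratCfgs
      rw [if_neg (by omega), if_neg (by omega), if_neg (by omega), if_neg (by omega),
        if_neg (by omega), if_neg (by omega), if_neg (by omega), if_pos h']
    have E8 : ∀ {i}, D+2 < i →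
        stratCfgs p0 k o e (2*v+1) p D i =
          ⟨Function.update (Function.update p0 k (o+6)) (2*v+1) (e+2), ∅,
            insert (D+1) (insert D (insert (D+2) (doneS p)))⟩ := by
      intro i h; unfold stratCfgs
      rw [if_neg (by omega), if_neg (by omega), if_neg (by omega), if_neg (by omega),
        if_neg (by omega), if_neg (by omega), if_neg (by omega), if_neg (by omega)]
    refine ⟨⟨stratCfgs p0 k o e (2*v+1) p D, E0 (Nat.zero_le p), ?_⟩, ?_, ?_⟩
    · -- steps
      intro i hi
      rw [hlen] at hi
      rcases Nat.lt_or_ge i p with h | h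
      · rw [E0 (by omega), E0 (by omega)]; exact Step.discard _
      by_cases h0 : i = p
      · subst h0
        rw [E0 le_rfl, E1 (by omega) le_rfl]
        exact Step.store _ (by simp)
      by_cases h1 : i = p + 1
      · subst h1
        rw [E1 (by omega) le_rfl, E2 (by omega) (by omega)]
        exact Step.store _ (le_trans (Finset.card_insert_le _ _) (by simp))
      rcases Nat.lt_or_ge i (p+6) with h6 | h6
      · rw [E2 (by omega) (by omega), E2 (by omega) (by omega)]; exact Step.discard _
      by_cases hp6 : i = p + 6
      · subst hp6
        rw [E2 (by omega) (by omega), E3 (by omega) (by omega)]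
        have hv6 := Hval 6 (by norm_num)
        refine Step.playNow _ _ ?_ ?_
        · rw [hv6]; show p0 k + 1 = o + 2; omega
        · rw [hv6]; exact PlayFromHand.refl _
      by_cases hp7 : i = p + 7
      · subst hp7
        rw [E3 (by omega) (by omega), E4 (by omega) (by omega)]
        have hv7 := Hval 7 (by norm_num)
        refine Step.playNow _ _ ?_ ?_
        · rw [hv7]; show Function.update p0 k (o+2) k + 1 = o + 3
          simp [Function.update_self]
        · rw [hv7]
          show PlayFromHand σ ⟨Function.update (Function.update p0 k (o+2)) k (o+3),
            insert (p+1) (insert p ∅), insert (p+7) (insert (p+6) ∅)⟩ _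
          rw [Function.update_idem]
          exact PlayFromHand.refl _
      by_cases hp8 : i = p + 8
      · subst hp8
        rw [E4 (by omega) (by omega), E5 (by omega) (by omega)]
        have hv8 := Hval 8 (by norm_num)
        have hv0 := Hval 0 (by norm_num)
        have hv1 := Hval 1 (by norm_num)
        rw [Nat.add_zero] at hv0
        refine Step.playNow _ _ ?_ ?_
        · rw [hv8]; show Function.update p0 k (o+3) k + 1 = o + 4
          simp [Function.update_self]
        · rw [hv8]
          show PlayFromHand σ ⟨Function.update (Function.update p0 k (o+3)) k (o+4),
            insert (p+1) (insert p ∅), insert (p+8) (insert (p+7) (insert (p+6) ∅))⟩ _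
          refine PlayFromHand.play _ _ p (by simp) ?_ ?_
          · rw [hv0]
            show Function.update (Function.update p0 k (o+3)) k (o+4) k + 1 = o + 5
            simp [Function.update_self]
          · rw [hv0]
            show PlayFromHand σ ⟨Function.update (Function.update
                (Function.update p0 k (o+3)) k (o+4)) k (o+5),
              Finset.erase (insert (p+1) (insert p ∅) : Finset ℕ) p,
              insert p (insert (p+8) (insert (p+7) (insert (p+6) ∅)))⟩ _
            refine PlayFromHand.play _ _ (p+1) (by simp [Finset.mem_erase]) ?_ ?_
            · rw [hv1]
              show Function.update (Function.update
                (Function.update p0 k (o+3)) k (o+4)) k (o+5) k + 1 = o + 6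
              simp [Function.update_self]
            · rw [hv1]
              show PlayFromHand σ ⟨Function.update (Function.update (Function.update
                  (Function.update p0 k (o+3)) k (o+4)) k (o+5)) k (o+6),
                Finset.erase (Finset.erase (insert (p+1) (insert p ∅) : Finset ℕ) p) (p+1),
                insert (p+1) (insert p (insert (p+8) (insert (p+7) (insert (p+6) ∅))))⟩ _
              have hh : Finset.erase (Finset.erase
                  (insert (p+1) (insert p ∅) : Finset ℕ) p) (p+1) = ∅ := by
                ext x; simp [Finset.mem_erase]; omega
              rw [hh, Function.update_idem, Function.update_idem, Function.update_idem]
              exact PlayFromHand.refl _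
      rcases Nat.lt_or_ge i D with hiD | hiD
      · rw [E5 (by omega) (by omega), E5 (by omega) (by omega)]; exact Step.discard _
      by_cases hd0' : i = D
      · subst hd0'
        rw [E5 (by omega) le_rfl, E6 (by omega) le_rfl]
        exact Step.store _ (by simp)
      by_cases hd1' : i = D + 1
      · subst hd1'
        rw [E6 (by omega) le_rfl, E7 (by omega) (by omega)]
        exact Step.store _ (le_trans (Finset.card_insert_le _ _) (by simp))
      by_cases hd2' : i = D + 2
      · subst hd2'
        rw [E7 (by omega) le_rfl, E8 (by omega)]
        have hdm0 : nth σ D = (e+1, 2*v+1) := by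
          have := Hdum 0 (by norm_num)
          rw [Nat.add_zero] at this
          rw [this]; rfl
        have hdm1 : nth σ (D+1) = (e+2, 2*v+1) := by rw [Hdum 1 (by norm_num)]; rfl
        have hdm2 : nth σ (D+2) = (e, 2*v+1) := by rw [Hdum 2 (by norm_num)]; rfl
        refine Step.playNow _ _ ?_ ?_
        · rw [hdm2]
          show Function.update p0 k (o+6) (2*v+1) + 1 = e
          rw [Function.update_of_ne (by omega : (2*v+1 : ℕ) ≠ k)]
          omega
        · rw [hdm2]
          show PlayFromHand σ ⟨Function.update (Function.update p0 k (o+6)) (2*v+1) e,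
            insert (D+1) (insert D ∅), insert (D+2) (doneS p)⟩ _
          refine PlayFromHand.play _ _ D (by simp) ?_ ?_
          · rw [hdm0]
            show Function.update (Function.update p0 k (o+6)) (2*v+1) e (2*v+1) + 1 = e + 1
            simp [Function.update_self]
          · rw [hdm0]
            show PlayFromHand σ ⟨Function.update (Function.update
                (Function.update p0 k (o+6)) (2*v+1) e) (2*v+1) (e+1),
              Finset.erase (insert (D+1) (insert D ∅) : Finset ℕ) D,
              insert D (insert (D+2) (doneS p))⟩ _
            refine PlayFromHand.play _ _ (D+1) (by simp [Finset.mem_erase]) ?_ ?_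
            · rw [hdm1]
              show Function.update (Function.update (Function.update p0 k (o+6))
                (2*v+1) e) (2*v+1) (e+1) (2*v+1) + 1 = e + 2
              simp [Function.update_self]
            · rw [hdm1]
              show PlayFromHand σ ⟨Function.update (Function.update (Function.update
                  (Function.update p0 k (o+6)) (2*v+1) e) (2*v+1) (e+1)) (2*v+1) (e+2),
                Finset.erase (Finset.erase (insert (D+1) (insert D ∅) : Finset ℕ) D) (D+1),
                insert (D+1) (insert D (insert (D+2) (doneS p)))⟩ _
              have hh : Finset.erase (Finset.erase
                  (insert (D+1) (insert D ∅) : Finset ℕ) D) (D+1) = ∅ := by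
                ext x; simp [Finset.mem_erase]; omega
              rw [hh, Function.update_idem, Function.update_idem]
              exact PlayFromHand.refl _
      · rw [E8 (by omega), E8 (by omega)]; exact Step.discard _
    · -- dummy progress
      show e + 2 ≤ (stratCfgs p0 k o e (2*v+1) p D σ.length).played (2*v+1)
      rw [hlen, E8 (by omega)]
      simp [Function.update_self]
    · -- color k progress
      show o + 6 ≤ (stratCfgs p0 k o e (2*v+1) p D σ.length).played k
      rw [hlen, E8 (by omega)]
      simp [Function.update_self, Function.update_of_ne (show k ≠ 2*v+1 by omega)]

  · -- upper bound
    intro ps _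
    have h0 : KInv o k p 0 ⟨p0, ∅, ∅⟩ := by
      refine { handSub := by simp, doneSub := by simp, handCard := by simp,
               lo := by simp [hp0k], hi := by simp [hp0k],
               d6 := ?_, d7 := ?_, d8 := ?_, d0 := ?_, d1 := ?_,
               r0 := ?_, r1 := ?_, n2 := by simp, scount := by simp } <;>
      · intro hh
        first
          | (exfalso; revert hh; simp [hp0k])
          | (exact absurd hh (by simp))
    have hfin := playseq_KInv Hcol Hval ps h0 σ.length le_rfl
    exact hfin.hi
end
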